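/- arXiv:1701.01965 — 14 statements merged into one kernel-verified Lean document; each statement's English description precedes it below -/
import Mathlib

section
/- Let σ > 0 and α, r ∈ ℝ satisfy (σ²/2 − α)² + 2σ²r ≤ 0 (i.e. the characteristic polynomial P(d) = (σ²/2)d² + (α − σ²/2)d − r has a double real root or two complex conjugate roots). Let g : (0,∞) → [0,∞] be Borel measurable with ∫₀^∞ g(y) dy > 0 (possibly infinite). Then for every x > 0 the iterated integral ∫₀^∞ e^{−rt} ( ∫_ℝ g( x·exp((α − σ²/2)t + σw) ) · e^{−w²/(2t)}/√(2πt) dw ) dt equals +∞. -/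
/-!
Substituting `b = (α - σ²/2) t + σ w` turns the inner integral into an integral against the
heat kernel of variance `σ² t` in the log-price `b`. Completing the square, the discount
`e^{-rt}` times the Gaussian density dominates `e^{m b/σ²} e^{-b²/(2σ² t)}/√(2πt)` with
`m = α - σ²/2`, precisely because `m² + 2σ² r ≤ 0`. After Tonelli, the time integral of
`e^{-b²/(2σ² t)}/√(2πt)` diverges for every `b` (the integrand is of order `t^{-1/2}`), and
`g(x e^b)` is nonzero on a set of positive measure since `∫₀^∞ g > 0`.
-/

open MeasureTheory Set Real
open scoped ENNReal

lemma lintegral_comp_add_mul (f : ℝ → ℝ≥0∞) (c : ℝ) {a : ℝ} (ha : 0 < a) :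
    ∫⁻ w, f (c + a * w) = (ENNReal.ofReal a)⁻¹ * ∫⁻ b, f b := by
  have himage : (fun w => c + a * w) '' univ = univ :=
    image_univ_of_surjective fun b => ⟨(b - c) / a, by field_simp; ring⟩
  have hderiv : ∀ w ∈ univ, HasDerivWithinAt (fun w => c + a * w) a univ w := fun w _ =>
    (((hasDerivAt_id w).const_mul a).const_add c).hasDerivWithinAt.congr_deriv (mul_one a)
  have hinj : InjOn (fun w => c + a * w) univ :=
    ((add_right_injective c).comp (mul_right_injective₀ ha.ne')).injOn
  have h := lintegral_image_eq_lintegral_abs_deriv_mul MeasurableSet.univ hderiv hinj f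
  rw [himage, Measure.restrict_univ, abs_of_pos ha,
    lintegral_const_mul' _ _ ENNReal.ofReal_ne_top] at h
  rw [h, ← mul_assoc, ENNReal.inv_mul_cancel (by simpa using ha) ENNReal.ofReal_ne_top, one_mul]

lemma lintegral_Ioi_eq_lintegral_comp_mul_exp (g : ℝ → ℝ≥0∞) {x : ℝ} (hx : 0 < x) :
    ∫⁻ y in Ioi 0, g y = ∫⁻ b, ENNReal.ofReal (x * exp b) * g (x * exp b) := by
  have himage : (fun b => x * exp b) '' univ = Ioi 0 := by
    ext y
    simp only [image_univ, mem_range, mem_Ioi]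
    refine ⟨fun ⟨b, hb⟩ => hb ▸ by positivity, fun hy => ⟨log (y / x), ?_⟩⟩
    rw [exp_log (by positivity)]
    field_simp
  have hderiv : ∀ b ∈ univ, HasDerivWithinAt (fun b => x * exp b) (x * exp b) univ b :=
    fun b _ => ((hasDerivAt_exp b).const_mul x).hasDerivWithinAt
  have hinj : InjOn (fun b => x * exp b) univ :=
    ((mul_right_injective₀ hx.ne').comp exp_injective).injOn
  have h := lintegral_image_eq_lintegral_abs_deriv_mul MeasurableSet.univ hderiv hinj g
  rw [himage, Measure.restrict_univ] at h
  simpa only [abs_of_pos (by positivity : 0 < x * exp _)] using h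

lemma lintegral_Ioi_rpow_eq_top {s T : ℝ} (hs : -1 ≤ s) (hT : 0 < T) :
    ∫⁻ t in Ioi T, ENNReal.ofReal (t ^ s) = ⊤ := by
  by_contra h
  have hint : IntegrableOn (fun t : ℝ => t ^ s) (Ioi T) :=
    (lintegral_ofReal_ne_top_iff_integrable (measurable_id.pow_const s).aestronglyMeasurable
      (ae_restrict_of_forall_mem measurableSet_Ioi fun t ht =>
        rpow_nonneg (hT.trans ht).le s)).1 h
  rw [integrableOn_Ioi_rpow_iff hT] at hint
  linarith

lemma lintegral_Ioi_exp_neg_div_div_sqrt_eq_top (c : ℝ) {a : ℝ} (ha : 0 < a) :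
    ∫⁻ t in Ioi 0, ENNReal.ofReal (exp (-c / t) / √(a * t)) = ⊤ := by
  set C := exp (-|c|) / √a
  have hC : 0 < C := by positivity
  have hbound : ∀ t ∈ Ioi (1 : ℝ), C * t ^ (-1 / 2 : ℝ) ≤ exp (-c / t) / √(a * t) := by
    intro t ht
    have ht0 : 0 < t := zero_lt_one.trans ht
    have hexp : exp (-|c|) ≤ exp (-c / t) := by
      rw [exp_le_exp, neg_div, neg_le_neg_iff]
      exact (div_le_div_of_nonneg_right (le_abs_self c) ht0.le).trans
        (div_le_self (abs_nonneg c) (le_of_lt ht))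
    rw [show (-1 / 2 : ℝ) = -(1 / 2) by norm_num, rpow_neg ht0.le, ← sqrt_eq_rpow,
      sqrt_mul ha.le, ← div_eq_mul_inv, div_div]
    exact div_le_div_of_nonneg_right hexp (by positivity)
  rw [eq_top_iff]
  calc ⊤ = ENNReal.ofReal C * ∫⁻ t in Ioi 1, ENNReal.ofReal (t ^ (-1 / 2 : ℝ)) := by
        rw [lintegral_Ioi_rpow_eq_top (by norm_num) zero_lt_one,
          ENNReal.mul_top (by simpa using hC)]
    _ = ∫⁻ t in Ioi 1, ENNReal.ofReal (C * t ^ (-1 / 2 : ℝ)) := by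
        rw [← lintegral_const_mul' _ _ ENNReal.ofReal_ne_top]
        simp_rw [ENNReal.ofReal_mul hC.le]
    _ ≤ ∫⁻ t in Ioi 1, ENNReal.ofReal (exp (-c / t) / √(a * t)) :=
        setLIntegral_mono' measurableSet_Ioi fun t ht => ENNReal.ofReal_le_ofReal (hbound t ht)
    _ ≤ _ := lintegral_mono_set (Ioi_subset_Ioi zero_le_one)

lemma exp_mul_exp_le_of_sq_add_mul_nonpos {σ m r t : ℝ} (hσ : 0 < σ)
    (hdiscr : m ^ 2 + 2 * σ ^ 2 * r ≤ 0) (ht : 0 < t) (w : ℝ) :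
    exp (m * (m * t + σ * w) / σ ^ 2) * exp (-((m * t + σ * w) ^ 2 / (2 * σ ^ 2)) / t) ≤
      exp (-r * t) * exp (-w ^ 2 / (2 * t)) := by
  rw [← exp_add, ← exp_add, exp_le_exp]
  have hsquare : m * (m * t + σ * w) / σ ^ 2 + -((m * t + σ * w) ^ 2 / (2 * σ ^ 2)) / t
      = m ^ 2 * t / (2 * σ ^ 2) + -w ^ 2 / (2 * t) := by
    field_simp
    ring
  have hdrift : m ^ 2 * t / (2 * σ ^ 2) ≤ -r * t := by
    rw [div_le_iff₀ (by positivity)]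
    nlinarith
  linarith

lemma inv_mul_lintegral_tilted_heatKernel_le (f : ℝ → ℝ≥0∞) {σ m r t : ℝ} (hσ : 0 < σ)
    (hdiscr : m ^ 2 + 2 * σ ^ 2 * r ≤ 0) (ht : 0 < t) :
    (ENNReal.ofReal σ)⁻¹ * ∫⁻ b, f b * ENNReal.ofReal (exp (m * b / σ ^ 2)) *
        ENNReal.ofReal (exp (-(b ^ 2 / (2 * σ ^ 2)) / t) / √(2 * π * t)) ≤
      ENNReal.ofReal (exp (-r * t)) *
        ∫⁻ w, f (m * t + σ * w) * ENNReal.ofReal (exp (-w ^ 2 / (2 * t)) / √(2 * π * t)) := by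
  rw [← lintegral_comp_add_mul _ (m * t) hσ,
    ← lintegral_const_mul' _ _ ENNReal.ofReal_ne_top]
  refine lintegral_mono fun w => ?_
  have hreal : exp (m * (m * t + σ * w) / σ ^ 2) *
        (exp (-((m * t + σ * w) ^ 2 / (2 * σ ^ 2)) / t) / √(2 * π * t)) ≤
      exp (-r * t) * (exp (-w ^ 2 / (2 * t)) / √(2 * π * t)) := by
    rw [← mul_div_assoc, ← mul_div_assoc]
    exact div_le_div_of_nonneg_right (exp_mul_exp_le_of_sq_add_mul_nonpos hσ hdiscr ht w)
      (sqrt_nonneg _)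
  rw [mul_assoc, ← ENNReal.ofReal_mul (exp_nonneg _), mul_left_comm,
    ← ENNReal.ofReal_mul (exp_nonneg _)]
  exact mul_le_mul_right (ENNReal.ofReal_le_ofReal hreal) _

theorem lintegral_discounted_gaussian_shift_eq_top {f : ℝ → ℝ≥0∞} (hf : Measurable f)
    (hf0 : ¬f =ᵐ[volume] 0) {σ m r : ℝ} (hσ : 0 < σ) (hdiscr : m ^ 2 + 2 * σ ^ 2 * r ≤ 0) :
    ∫⁻ t in Ioi 0, ENNReal.ofReal (exp (-r * t)) *
        ∫⁻ w, f (m * t + σ * w) * ENNReal.ofReal (exp (-w ^ 2 / (2 * t)) / √(2 * π * t)) = ⊤ := by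
  set H : ℝ → ℝ≥0∞ := fun b => f b * ENNReal.ofReal (exp (m * b / σ ^ 2))
  set K : ℝ → ℝ → ℝ≥0∞ := fun t b =>
    ENNReal.ofReal (exp (-(b ^ 2 / (2 * σ ^ 2)) / t) / √(2 * π * t))
  have hH : Measurable H := by fun_prop
  have hHK : Measurable fun p : ℝ × ℝ => H p.2 * K p.1 p.2 := by fun_prop
  have hH0 : ∫⁻ b, H b ≠ 0 := by
    rw [Ne, lintegral_eq_zero_iff hH]
    refine fun hHae => hf0 (hHae.mono fun b hb => ?_)
    have hexp : ENNReal.ofReal (exp (m * b / σ ^ 2)) ≠ 0 := by simp [exp_pos]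
    exact (mul_eq_zero.1 hb).resolve_right hexp
  have hK_top : ∀ b, ∫⁻ t in Ioi 0, K t b = ⊤ := fun b =>
    lintegral_Ioi_exp_neg_div_div_sqrt_eq_top _ (by positivity)
  have htonelli : ∫⁻ t in Ioi 0, ∫⁻ b, H b * K t b = ⊤ := by
    rw [lintegral_lintegral_swap hHK.aemeasurable]
    have hKb : ∀ b, Measurable fun t => K t b := fun b => by fun_prop
    simp_rw [lintegral_const_mul _ (hKb _), hK_top]
    rw [lintegral_mul_const _ hH, ENNReal.mul_top hH0]
  rw [eq_top_iff]
  calc ⊤ = ∫⁻ t in Ioi 0, (ENNReal.ofReal σ)⁻¹ * ∫⁻ b, H b * K t b := by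
        rw [lintegral_const_mul' _ _ (by simpa using hσ), htonelli,
          ENNReal.mul_top (by simp)]
    _ ≤ _ := setLIntegral_mono' measurableSet_Ioi fun t ht =>
        inv_mul_lintegral_tilted_heatKernel_le f hσ hdiscr ht

/-- If the characteristic polynomial `P(d) = (σ²/2)d² + (α − σ²/2)d − r` has a double real
root or complex conjugate roots (i.e. `(σ²/2 − α)² + 2σ²r ≤ 0`), then for every nonnegative
Borel function `g` with positive integral on `(0,∞)`, the expected discounted payoff
`E_x[∫₀^∞ e^{−rt} g(X(t)) dt]`, written as an iterated integral, is infinite. -/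
theorem stmt_0 (σ α r : ℝ) (hσ : 0 < σ)
    (hΔ : (σ ^ 2 / 2 - α) ^ 2 + 2 * σ ^ 2 * r ≤ 0)
    (g : ℝ → ENNReal) (hg : Measurable g)
    (hgpos : 0 < ∫⁻ y in Set.Ioi (0 : ℝ), g y)
    (x : ℝ) (hx : 0 < x) :
    (∫⁻ t in Set.Ioi (0 : ℝ),
        ENNReal.ofReal (Real.exp (-r * t)) *
          ∫⁻ w : ℝ,
            g (x * Real.exp ((α - σ ^ 2 / 2) * t + σ * w)) *
              ENNReal.ofReal (Real.exp (-w ^ 2 / (2 * t)) / Real.sqrt (2 * Real.pi * t)))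
      = ⊤ := by
  have hdiscr : (α - σ ^ 2 / 2) ^ 2 + 2 * σ ^ 2 * r ≤ 0 := by
    rwa [← neg_sub, neg_sq]
  have hg0 : ¬(fun b => g (x * exp b)) =ᵐ[volume] 0 := fun hae => by
    have hzero : (fun b => ENNReal.ofReal (x * exp b) * g (x * exp b)) =ᵐ[volume] 0 :=
      hae.mono fun b hb => by simp [show g (x * exp b) = 0 from hb]
    rw [lintegral_Ioi_eq_lintegral_comp_mul_exp g hx, lintegral_congr_ae hzero,
      lintegral_zero_fun] at hgpos
    exact hgpos.false
  exact lintegral_discounted_gaussian_shift_eq_top (hg.comp (by fun_prop)) hg0 hσ hdiscr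
end

section
/- Fix σ > 0 and r ∈ ℝ. For α ∈ ℝ with Δ(α) := (σ²/2 − α)² + 2σ²r > 0, let d₁(α) := ((σ²/2 − α) − √Δ(α))/σ². Then at every such α the function d₁ is differentiable with d₁′(α) = (1/σ²)·(−1 + (σ²/2 − α)/√Δ(α)), and the following sign pattern holds: d₁′(α) < 0 if r > 0; d₁′(α) = 0 if r = 0 and α < σ²/2; d₁′(α) < 0 if r = 0 and α > σ²/2; d₁′(α) > 0 if r < 0 and α < σ²/2; d₁′(α) < 0 if r < 0 and α > σ²/2. -/
/-! With `u := σ²/2 − α` and `k := 2σ²r`, one has `d₁ = (u − √(u² + k))/σ²`, so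
`d₁′ = (−1 + u/√(u² + k))/σ²`, and the sign pattern is that of `u − √(u² + k)`:
negative when `k > 0` or `u < 0`, zero when `k = 0 < u`, and positive when `k < 0 < u`. -/

open Real

lemma hasDerivAt_sub_sub_sqrt_sq_add {b k x : ℝ} (h : 0 < (b - x) ^ 2 + k) :
    HasDerivAt (fun a => (b - a) - √((b - a) ^ 2 + k))
      (-1 + (b - x) / √((b - x) ^ 2 + k)) x := by
  have hlin : HasDerivAt (fun a : ℝ => b - a) (-1) x := by
    simpa using (hasDerivAt_id x).const_sub b
  have hsqrt : HasDerivAt (fun a => √((b - a) ^ 2 + k))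
      (2 * (b - x) * -1 / (2 * √((b - x) ^ 2 + k))) x := by
    simpa using ((hlin.pow 2).add_const k).sqrt h.ne'
  refine (hlin.sub hsqrt).congr_deriv ?_
  have hs : √((b - x) ^ 2 + k) ≠ 0 := (sqrt_pos.mpr h).ne'
  field_simp
  ring

lemma div_sqrt_sq_add_lt_one {u k : ℝ} (hk : 0 < k) : u / √(u ^ 2 + k) < 1 := by
  have hlt : u < √(u ^ 2 + k) :=
    (le_abs_self u).trans_lt <| by
      rw [← sqrt_sq_eq_abs]
      exact sqrt_lt_sqrt (sq_nonneg u) (by linarith)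
  exact (div_lt_one (by positivity)).mpr hlt

lemma div_sqrt_sq_eq_one {u : ℝ} (hu : 0 < u) : u / √(u ^ 2) = 1 := by
  rw [sqrt_sq hu.le, div_self hu.ne']

lemma div_sqrt_sq_add_neg {u k : ℝ} (hu : u < 0) (h : 0 < u ^ 2 + k) :
    u / √(u ^ 2 + k) < 0 :=
  div_neg_of_neg_of_pos hu (sqrt_pos.mpr h)

lemma one_lt_div_sqrt_sq_add {u k : ℝ} (hk : k < 0) (hu : 0 < u) (h : 0 < u ^ 2 + k) :
    1 < u / √(u ^ 2 + k) := by
  have hlt : √(u ^ 2 + k) < u := (sqrt_lt' hu).mpr (by linarith)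
  exact (one_lt_div (sqrt_pos.mpr h)).mpr hlt

/-- Behaviour of the smaller root `d₁(α)` of the characteristic polynomial
`P(d) = (σ²/2)d² + (α − σ²/2)d − r` as a function of the drift `α`:
value of the derivative and its sign pattern according to the signs of `r`
and of `σ²/2 − α`. -/
theorem stmt_1 (σ r α : ℝ) (hσ : 0 < σ)
    (hΔ : 0 < (σ ^ 2 / 2 - α) ^ 2 + 2 * σ ^ 2 * r) :
    HasDerivAt
      (fun a : ℝ => ((σ ^ 2 / 2 - a) - Real.sqrt ((σ ^ 2 / 2 - a) ^ 2 + 2 * σ ^ 2 * r)) / σ ^ 2)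
      ((1 / σ ^ 2) *
        (-1 + (σ ^ 2 / 2 - α) / Real.sqrt ((σ ^ 2 / 2 - α) ^ 2 + 2 * σ ^ 2 * r))) α ∧
    (0 < r →
      (1 / σ ^ 2) * (-1 + (σ ^ 2 / 2 - α) / Real.sqrt ((σ ^ 2 / 2 - α) ^ 2 + 2 * σ ^ 2 * r)) < 0) ∧
    (r = 0 → α < σ ^ 2 / 2 →
      (1 / σ ^ 2) * (-1 + (σ ^ 2 / 2 - α) / Real.sqrt ((σ ^ 2 / 2 - α) ^ 2 + 2 * σ ^ 2 * r)) = 0) ∧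
    (r = 0 → σ ^ 2 / 2 < α →
      (1 / σ ^ 2) * (-1 + (σ ^ 2 / 2 - α) / Real.sqrt ((σ ^ 2 / 2 - α) ^ 2 + 2 * σ ^ 2 * r)) < 0) ∧
    (r < 0 → α < σ ^ 2 / 2 →
      0 < (1 / σ ^ 2) * (-1 + (σ ^ 2 / 2 - α) / Real.sqrt ((σ ^ 2 / 2 - α) ^ 2 + 2 * σ ^ 2 * r))) ∧
    (r < 0 → σ ^ 2 / 2 < α →
      (1 / σ ^ 2) * (-1 + (σ ^ 2 / 2 - α) / Real.sqrt ((σ ^ 2 / 2 - α) ^ 2 + 2 * σ ^ 2 * r)) < 0) := by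
  have hc : 0 < 1 / σ ^ 2 := by positivity
  refine ⟨?_, fun hr => ?_, fun hr hα => ?_, fun _ hα => ?_, fun hr hα => ?_, fun _ hα => ?_⟩
  · exact ((hasDerivAt_sub_sub_sqrt_sq_add hΔ).div_const (σ ^ 2)).congr_deriv (by ring)
  · have := div_sqrt_sq_add_lt_one (u := σ ^ 2 / 2 - α) (by positivity : 0 < 2 * σ ^ 2 * r)
    exact mul_neg_of_pos_of_neg hc (by linarith)
  · subst hr
    rw [mul_zero, add_zero, div_sqrt_sq_eq_one (sub_pos.mpr hα)]
    ring
  · have := div_sqrt_sq_add_neg (sub_neg.mpr hα) hΔ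
    exact mul_neg_of_pos_of_neg hc (by linarith)
  · have := one_lt_div_sqrt_sq_add (mul_neg_of_pos_of_neg (by positivity) hr) (sub_pos.mpr hα) hΔ
    exact mul_pos hc (by linarith)
  · have := div_sqrt_sq_add_neg (sub_neg.mpr hα) hΔ
    exact mul_neg_of_pos_of_neg hc (by linarith)
end

section
/- Fix α, r ∈ ℝ. For v > 0 with Δ(v) := (v/2 − α)² + 2vr > 0, let d₁(v) := ((v/2 − α) − √Δ(v))/v and d₂(v) := ((v/2 − α) + √Δ(v))/v. Then at every such v the function d₁ is differentiable with d₁′(v) = −2(α·d₁(v) − r)/(v²(d₂(v) − d₁(v))); moreover α·d₁(v) − r = (v/2)·d₁(v)(1 − d₁(v)), so that d₁′(v) has the same sign as d₁(v)(d₁(v) − 1): it is positive if d₁(v) < 0 or d₁(v) > 1, zero if d₁(v) ∈ {0,1}, and negative if 0 < d₁(v) < 1. -/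
/-! Being a root of `P`, `d₁` satisfies `α d₁ − r = (v/2) d₁ (1 − d₁)`, which turns the claimed
derivative into `d₁(d₁ − 1)/(v(d₂ − d₁))`; the denominator is `2√Δ > 0`, so the sign is that of
`d₁(d₁ − 1)`. The derivative itself is a direct quotient/chain-rule computation, simplified with
`(√Δ)² = Δ`. -/

/-- The smaller root of the characteristic polynomial `P(d) = (v/2)d² + (α − v/2)d − r`,
viewed as a function of the squared volatility `v`. -/
noncomputable def dOne (α r v : ℝ) : ℝ :=
  ((v / 2 - α) - Real.sqrt ((v / 2 - α) ^ 2 + 2 * v * r)) / v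

/-- The larger root of the characteristic polynomial `P(d) = (v/2)d² + (α − v/2)d − r`,
viewed as a function of the squared volatility `v`. -/
noncomputable def dTwo (α r v : ℝ) : ℝ :=
  ((v / 2 - α) + Real.sqrt ((v / 2 - α) ^ 2 + 2 * v * r)) / v

noncomputable def discr (α r v : ℝ) : ℝ := (v / 2 - α) ^ 2 + 2 * v * r

section
variable {α r v : ℝ}

theorem dOne_eq : dOne α r v = ((v / 2 - α) - √(discr α r v)) / v := rfl

theorem dTwo_eq : dTwo α r v = ((v / 2 - α) + √(discr α r v)) / v := rfl

theorem dTwo_sub_dOne (hv : v ≠ 0) : dTwo α r v - dOne α r v = 2 * √(discr α r v) / v := by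
  rw [dOne_eq, dTwo_eq]; field_simp; ring

theorem dTwo_sub_dOne_pos (hv : 0 < v) (hΔ : 0 < discr α r v) : 0 < dTwo α r v - dOne α r v := by
  rw [dTwo_sub_dOne hv.ne']
  have := Real.sqrt_pos.mpr hΔ
  positivity

theorem dOne_isRoot (hv : v ≠ 0) (hΔ : 0 ≤ discr α r v) :
    v / 2 * dOne α r v ^ 2 + (α - v / 2) * dOne α r v - r = 0 := by
  have hs : √(discr α r v) ^ 2 = (v / 2 - α) ^ 2 + 2 * v * r := Real.sq_sqrt hΔ
  rw [dOne_eq]; field_simp; linear_combination 4 * hs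

theorem mul_dOne_sub_eq (hv : v ≠ 0) (hΔ : 0 ≤ discr α r v) :
    α * dOne α r v - r = v / 2 * dOne α r v * (1 - dOne α r v) := by
  linear_combination dOne_isRoot hv hΔ

theorem hasDerivAt_discr : HasDerivAt (discr α r) (v / 2 - α + 2 * r) v := by
  have hlin : HasDerivAt (fun w : ℝ => w / 2 - α) (1 / 2) v :=
    ((hasDerivAt_id v).div_const 2).sub_const α
  exact ((hlin.pow 2).add (((hasDerivAt_id v).const_mul 2).mul_const r)).congr_deriv
    (by
      simp only [Nat.cast_ofNat, Nat.add_one_sub_one, pow_one, one_div, mul_one, add_left_inj]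
      ring)

theorem hasDerivAt_dOne (hv : v ≠ 0) (hΔ : 0 < discr α r v) :
    HasDerivAt (dOne α r)
      (dOne α r v * (dOne α r v - 1) / (v * (dTwo α r v - dOne α r v))) v := by
  have hs : 0 < √(discr α r v) := Real.sqrt_pos.mpr hΔ
  have hs_sq : √(discr α r v) ^ 2 = (v / 2 - α) ^ 2 + 2 * v * r := Real.sq_sqrt hΔ.le
  have hnum : HasDerivAt (fun w => (w / 2 - α) - √(discr α r w))
      (1 / 2 - 1 / (2 * √(discr α r v)) * (v / 2 - α + 2 * r)) v :=
    (((hasDerivAt_id v).div_const 2).sub_const α).sub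
      ((Real.hasDerivAt_sqrt hΔ.ne').comp v hasDerivAt_discr)
  refine (hnum.div (hasDerivAt_id v) hv).congr_deriv ?_
  rw [dTwo_sub_dOne hv, dOne_eq, id]
  field_simp
  linear_combination 4 * hs_sq

end

/-- Behaviour of the smaller root `d₁(v)` as a function of the squared volatility `v`:
the derivative equals `−2(α d₁ − r)/(v²(d₂ − d₁))`, one has
`α d₁ − r = (v/2) d₁ (1 − d₁)`, and the sign of the derivative matches the sign of
`d₁(d₁ − 1)`. -/
theorem stmt_3 (α r v : ℝ) (hv : 0 < v)
    (hΔ : 0 < (v / 2 - α) ^ 2 + 2 * v * r) :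
    HasDerivAt (dOne α r)
      (-2 * (α * dOne α r v - r) / (v ^ 2 * (dTwo α r v - dOne α r v))) v ∧
    α * dOne α r v - r = (v / 2) * dOne α r v * (1 - dOne α r v) ∧
    ((dOne α r v < 0 ∨ 1 < dOne α r v) →
      0 < -2 * (α * dOne α r v - r) / (v ^ 2 * (dTwo α r v - dOne α r v))) ∧
    ((dOne α r v = 0 ∨ dOne α r v = 1) →
      -2 * (α * dOne α r v - r) / (v ^ 2 * (dTwo α r v - dOne α r v)) = 0) ∧
    ((0 < dOne α r v ∧ dOne α r v < 1) →
      -2 * (α * dOne α r v - r) / (v ^ 2 * (dTwo α r v - dOne α r v)) < 0) := by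
  set d := dOne α r v
  have hroot := mul_dOne_sub_eq hv.ne' hΔ.le
  have hden : 0 < v * (dTwo α r v - d) := mul_pos hv (dTwo_sub_dOne_pos hv hΔ)
  have hderiv : -2 * (α * d - r) / (v ^ 2 * (dTwo α r v - d)) =
      d * (d - 1) / (v * (dTwo α r v - d)) := by
    rw [hroot]; field_simp; ring
  rw [hderiv]
  refine ⟨hasDerivAt_dOne hv.ne' hΔ, hroot, ?_, ?_, ?_⟩
  · rintro (h | h)
    · exact div_pos (mul_pos_of_neg_of_neg h (by linarith)) hden
    · exact div_pos (mul_pos (by linarith) (by linarith)) hden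
  · rintro (h | h) <;> simp [h]
  · rintro ⟨h₀, h₁⟩
    exact div_neg_of_neg_of_pos (mul_neg_of_pos_of_neg h₀ (by linarith)) hden
end

section
/- Let f : (0,∞) → ℝ be measurable, a > 0, and suppose f(x) ≤ 0 for a.e. x ∈ (0,a) and f(x) ≥ 0 for a.e. x ∈ (a,∞). Let z > 0 and m ∈ ℝ, and assume that s ↦ s^m f(s) and s ↦ s^m (log s) f(s) are Lebesgue integrable on (z,∞), that ∫_z^∞ s^m f(s) ds = 0, and that f is not a.e. zero on (z,∞). Then ∫_z^∞ s^m (log s) f(s) ds > 0. -/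
open MeasureTheory Set

/-- If `f ≤ 0` a.e. on `(0,a)`, `f ≥ 0` a.e. on `(a,∞)`, `s ↦ s^m f(s)` and
`s ↦ s^m (log s) f(s)` are integrable on `(z,∞)` with `∫_z^∞ s^m f(s) ds = 0` and `f`
not a.e. zero on `(z,∞)`, then `∫_z^∞ s^m (log s) f(s) ds > 0`. -/
theorem stmt_5 (f : ℝ → ℝ) (hf : Measurable f) (a : ℝ) (ha : 0 < a)
    (hneg : ∀ᵐ x ∂(volume.restrict (Set.Ioo 0 a)), f x ≤ 0)
    (hpos : ∀ᵐ x ∂(volume.restrict (Set.Ioi a)), 0 ≤ f x)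
    (z : ℝ) (hz : 0 < z) (m : ℝ)
    (hint1 : IntegrableOn (fun s : ℝ => s ^ m * f s) (Set.Ioi z))
    (hint2 : IntegrableOn (fun s : ℝ => s ^ m * Real.log s * f s) (Set.Ioi z))
    (hzero : ∫ s in Set.Ioi z, s ^ m * f s = 0)
    (hne : ¬ (∀ᵐ x ∂(volume.restrict (Set.Ioi z)), f x = 0)) :
    0 < ∫ s in Set.Ioi z, s ^ m * Real.log s * f s := by
  set g : ℝ → ℝ := fun s => s ^ m * (Real.log s - Real.log a) * f s with hg_def
  have hg_eq : g = fun s => s ^ m * Real.log s * f s - Real.log a * (s ^ m * f s) := by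
    funext s; simp only [hg_def]; ring
  have hg_int : IntegrableOn g (Set.Ioi z) := by
    rw [hg_eq]; exact hint2.sub (hint1.const_mul _)
  -- transfer sign hypotheses
  have hneg' : ∀ᵐ x ∂(volume : Measure ℝ), x ∈ Set.Ioo 0 a → f x ≤ 0 :=
    (ae_restrict_iff' measurableSet_Ioo).mp hneg
  have hpos' : ∀ᵐ x ∂(volume : Measure ℝ), x ∈ Set.Ioi a → 0 ≤ f x :=
    (ae_restrict_iff' measurableSet_Ioi).mp hpos
  have hnea : ∀ᵐ x ∂(volume : Measure ℝ), x ≠ a := by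
    refine ae_iff.mpr ?_
    have : {x : ℝ | ¬ x ≠ a} = {a} := by ext x; simp
    rw [this, measure_singleton]
  have hmem : ∀ᵐ x ∂(volume.restrict (Set.Ioi z)), x ∈ Set.Ioi z :=
    ae_restrict_mem measurableSet_Ioi
  have hg_nonneg : 0 ≤ᵐ[volume.restrict (Set.Ioi z)] g := by
    filter_upwards [ae_restrict_of_ae hneg', ae_restrict_of_ae hpos',
      ae_restrict_of_ae hnea, hmem] with x h1 h2 h3 hx
    have hx0 : 0 < x := lt_trans hz hx
    have hpow : 0 ≤ x ^ m := Real.rpow_nonneg hx0.le m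
    have : 0 ≤ (Real.log x - Real.log a) * f x := by
      rcases lt_or_gt_of_ne h3 with hlt | hgt
      · have hfx : f x ≤ 0 := h1 ⟨hx0, hlt⟩
        have hlog : Real.log x - Real.log a ≤ 0 :=
          sub_nonpos.mpr (Real.log_le_log hx0 hlt.le)
        exact mul_nonneg_of_nonpos_of_nonpos hlog hfx
      · have hfx : 0 ≤ f x := h2 hgt
        have hlog : 0 ≤ Real.log x - Real.log a :=
          sub_nonneg.mpr (Real.log_le_log ha hgt.le)
        exact mul_nonneg hlog hfx
    calc (0:ℝ) ≤ x ^ m * ((Real.log x - Real.log a) * f x) := mul_nonneg hpow this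
      _ = g x := by simp only [hg_def]; ring
  -- integral of g equals the target integral
  have hg_val : ∫ s in Set.Ioi z, g s = ∫ s in Set.Ioi z, s ^ m * Real.log s * f s := by
    rw [hg_eq, integral_sub hint2 (hint1.const_mul _), integral_const_mul, hzero,
      mul_zero, sub_zero]
  rw [← hg_val]
  rcases (integral_nonneg_of_ae hg_nonneg).lt_or_eq with h | h
  · exact h
  · exfalso
    have hgz : g =ᵐ[volume.restrict (Set.Ioi z)] 0 :=
      (integral_eq_zero_iff_of_nonneg_ae hg_nonneg hg_int).mp h.symm
    apply hne
    filter_upwards [hgz, ae_restrict_of_ae hnea, hmem] with x h0 h3 hx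
    have hx0 : 0 < x := lt_trans hz hx
    have hpow : x ^ m ≠ 0 := (Real.rpow_pos_of_pos hx0 m).ne'
    have hlog : Real.log x - Real.log a ≠ 0 := by
      rcases lt_or_gt_of_ne h3 with hlt | hgt
      · exact sub_ne_zero.mpr (Real.log_lt_log hx0 hlt).ne
      · exact sub_ne_zero.mpr (Real.log_lt_log ha hgt).ne'
    have : x ^ m * (Real.log x - Real.log a) * f x = 0 := h0
    rcases mul_eq_zero.mp this with h' | h'
    · rcases mul_eq_zero.mp h' with h'' | h''
      · exact absurd h'' hpow
      · exact absurd h'' hlog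
    · exact h'
end

section
/- Let f : (0,∞) → ℝ be measurable, a > 0, and suppose f(x) ≤ 0 for a.e. x ∈ (0,a) and f(x) ≥ 0 for a.e. x ∈ (a,∞). Let y > 0 and n ∈ ℝ, and assume that s ↦ s^n f(s) and s ↦ s^n (log s) f(s) are Lebesgue integrable on (0,y), that ∫_0^y s^n f(s) ds = 0, and that f is not a.e. zero on (0,y). Then ∫_0^y s^n (log s) f(s) ds > 0. -/
open MeasureTheory Set

/-- If `f ≤ 0` a.e. on `(0,a)`, `f ≥ 0` a.e. on `(a,∞)`, `s ↦ s^n f(s)` and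
`s ↦ s^n (log s) f(s)` are integrable on `(0,y)` with `∫_0^y s^n f(s) ds = 0` and `f`
not a.e. zero on `(0,y)`, then `∫_0^y s^n (log s) f(s) ds > 0`. -/
theorem stmt_6 (f : ℝ → ℝ) (hf : Measurable f) (a : ℝ) (ha : 0 < a)
    (hneg : ∀ᵐ x ∂(volume.restrict (Set.Ioo 0 a)), f x ≤ 0)
    (hpos : ∀ᵐ x ∂(volume.restrict (Set.Ioi a)), 0 ≤ f x)
    (y : ℝ) (hy : 0 < y) (n : ℝ)
    (hint1 : IntegrableOn (fun s : ℝ => s ^ n * f s) (Set.Ioo 0 y))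
    (hint2 : IntegrableOn (fun s : ℝ => s ^ n * Real.log s * f s) (Set.Ioo 0 y))
    (hzero : ∫ s in Set.Ioo (0 : ℝ) y, s ^ n * f s = 0)
    (hne : ¬ (∀ᵐ x ∂(volume.restrict (Set.Ioo (0 : ℝ) y)), f x = 0)) :
    0 < ∫ s in Set.Ioo (0 : ℝ) y, s ^ n * Real.log s * f s := by
  set g : ℝ → ℝ := fun s => (Real.log s - Real.log a) * (s ^ n * f s) with hg
  have hinteg : IntegrableOn g (Set.Ioo 0 y) := by
    have hEq : g = (fun s : ℝ => s ^ n * Real.log s * f s)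
        - fun s : ℝ => Real.log a * (s ^ n * f s) := by
      funext s; simp only [hg, Pi.sub_apply]; ring
    rw [hEq]
    exact hint2.sub (hint1.const_mul _)
  have hgint : ∫ s in Set.Ioo (0:ℝ) y, g s
      = ∫ s in Set.Ioo (0:ℝ) y, s ^ n * Real.log s * f s := by
    have hEq : ∀ s : ℝ, g s = s ^ n * Real.log s * f s - Real.log a * (s ^ n * f s) := by
      intro s; simp only [hg]; ring
    simp_rw [hEq]
    rw [integral_sub hint2 (hint1.const_mul _), integral_const_mul, hzero, mul_zero, sub_zero]
  rw [← hgint]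
  have hnn : 0 ≤ᵐ[volume.restrict (Set.Ioo 0 y)] g := by
    have h1 : ∀ᵐ x ∂volume, x ∈ Set.Ioo (0:ℝ) a → f x ≤ 0 :=
      (ae_restrict_iff' measurableSet_Ioo).mp hneg
    have h2 : ∀ᵐ x ∂volume, x ∈ Set.Ioi a → 0 ≤ f x :=
      (ae_restrict_iff' measurableSet_Ioi).mp hpos
    filter_upwards [ae_restrict_of_ae h1, ae_restrict_of_ae h2,
      ae_restrict_mem measurableSet_Ioo] with x hx1 hx2 hx
    have hxn : (0:ℝ) < x ^ n := Real.rpow_pos_of_pos hx.1 n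
    rcases lt_trichotomy x a with h | h | h
    · have hfx : f x ≤ 0 := hx1 ⟨hx.1, h⟩
      have hlog : Real.log x ≤ Real.log a := Real.log_le_log hx.1 h.le
      have key : 0 ≤ (Real.log a - Real.log x) * x ^ n * (-f x) :=
        mul_nonneg (mul_nonneg (by linarith) hxn.le) (by linarith)
      simp only [hg, Pi.zero_apply]; nlinarith
    · simp [hg, h]
    · have hfx : 0 ≤ f x := hx2 h
      have hlog : Real.log a ≤ Real.log x := Real.log_le_log ha h.le
      have key : 0 ≤ (Real.log x - Real.log a) * x ^ n * f x :=
        mul_nonneg (mul_nonneg (by linarith) hxn.le) hfx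
      simp only [hg, Pi.zero_apply]; nlinarith
  rw [setIntegral_pos_iff_support_of_nonneg_ae hnn hinteg]
  have hmeas : MeasurableSet {x : ℝ | f x ≠ 0} := (hf (measurableSet_singleton 0)).compl
  have hT : 0 < volume ({x : ℝ | f x ≠ 0} ∩ Set.Ioo 0 y) := by
    rw [pos_iff_ne_zero]
    intro h0
    apply hne
    rw [ae_iff, Measure.restrict_apply hmeas]
    exact h0
  have hT' : volume (({x : ℝ | f x ≠ 0} ∩ Set.Ioo 0 y) \ {a})
      = volume ({x : ℝ | f x ≠ 0} ∩ Set.Ioo 0 y) :=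
    measure_diff_null (measure_singleton a)
  refine lt_of_lt_of_le (hT' ▸ hT) (measure_mono ?_)
  rintro x ⟨⟨hfx, hxy⟩, hxa⟩
  refine ⟨?_, hxy⟩
  have hlogne : Real.log x - Real.log a ≠ 0 := by
    intro h
    exact (Set.mem_singleton_iff.not.mp hxa)
      (Real.log_injOn_pos (Set.mem_Ioi.mpr hxy.1) (Set.mem_Ioi.mpr ha) (by linarith [sub_eq_zero.mp h]))
  exact mul_ne_zero hlogne (mul_ne_zero (ne_of_gt (Real.rpow_pos_of_pos hxy.1 n)) hfx)
end

section
/- Let d₁ < d₂ be real numbers and let Π : (0,∞) → ℝ be Borel measurable and locally integrable on (0,∞). Assume there exists x₀ > 0 such that Π(x) ≥ 0 for a.e. x ∈ (0, x₀), and that s ↦ s^{−d₁−1} Π(s) is Lebesgue integrable on (0, x₀). Then for every ν > 0, lim_{x→0⁺} x^{d₂−d₁} ∫_x^ν s^{−d₂−1} Π(s) ds = 0. -/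
open MeasureTheory Set Filter

/-- If `Π ≥ 0` a.e. on `(0,x₀)` for some `x₀ > 0` and `s ↦ s^{−d₁−1} Π(s)` is integrable
on `(0,x₀)` with `d₁ < d₂`, then `x^{d₂−d₁} ∫_x^ν s^{−d₂−1} Π(s) ds → 0` as `x → 0⁺`. -/
theorem stmt_8 (d₁ d₂ : ℝ) (hd : d₁ < d₂)
    (Pf : ℝ → ℝ) (hPm : Measurable Pf)
    (hloc : LocallyIntegrableOn Pf (Set.Ioi 0))
    (x₀ : ℝ) (hx₀ : 0 < x₀)
    (hsign : ∀ᵐ x ∂(volume.restrict (Set.Ioo 0 x₀)), 0 ≤ Pf x)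
    (hint : IntegrableOn (fun s : ℝ => s ^ (-d₁ - 1) * Pf s) (Set.Ioo 0 x₀))
    (ν : ℝ) (hν : 0 < ν) :
    Tendsto (fun x : ℝ => x ^ (d₂ - d₁) * ∫ s in x..ν, s ^ (-d₂ - 1) * Pf s)
      (nhdsWithin 0 (Set.Ioi 0)) (nhds 0) := by
  have hp : (0:ℝ) < d₂ - d₁ := sub_pos.2 hd
  set m : ℝ := min ν x₀ with hmdef
  have hm : 0 < m := lt_min hν hx₀
  have hmx₀ : m ≤ x₀ := min_le_right _ _
  have hmν : m ≤ ν := min_le_left _ _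
  have hmeas : Measurable fun s : ℝ => s ^ (-d₂ - 1) * Pf s :=
    (measurable_id.pow_const (-d₂ - 1)).mul hPm
  -- interval integrability on positive intervals
  have hfint : ∀ a b : ℝ, 0 < a → 0 < b →
      IntervalIntegrable (fun s : ℝ => s ^ (-d₂ - 1) * Pf s) volume a b := by
    intro a b ha hb
    rw [intervalIntegrable_iff]
    have hab : 0 < min a b := lt_min ha hb
    have hsub : Set.uIoc a b ⊆ Set.Icc (min a b) (max a b) := Ioc_subset_Icc_self
    have hPint : IntegrableOn Pf (Set.Icc (min a b) (max a b)) := by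
      refine hloc.integrableOn_compact_subset (fun s hs => ?_) isCompact_Icc
      exact lt_of_lt_of_le hab hs.1
    have hcont : ContinuousOn (fun s : ℝ => s ^ (-d₂ - 1)) (Set.Icc (min a b) (max a b)) := by
      intro s hs
      exact (Real.continuousAt_rpow_const s _
        (Or.inl (ne_of_gt (lt_of_lt_of_le hab hs.1)))).continuousWithinAt
    obtain ⟨C, hC⟩ := isCompact_Icc.exists_bound_of_continuousOn hcont
    have hIcc : IntegrableOn (fun s : ℝ => s ^ (-d₂ - 1) * Pf s)
        (Set.Icc (min a b) (max a b)) := by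
      refine Integrable.bdd_mul (c := C) hPint (measurable_id.pow_const (-d₂ - 1)).aestronglyMeasurable ?_
      exact (ae_restrict_iff' measurableSet_Icc).2 (ae_of_all _ hC)
    exact hIcc.mono_set hsub
  -- the tail term
  have htail : Tendsto (fun x : ℝ => x ^ (d₂ - d₁) * ∫ s in m..ν, s ^ (-d₂ - 1) * Pf s)
      (nhdsWithin 0 (Set.Ioi 0)) (nhds 0) := by
    have h0 : Tendsto (fun x : ℝ => x ^ (d₂ - d₁)) (nhdsWithin 0 (Set.Ioi 0)) (nhds 0) := by
      have := (Real.continuousAt_rpow_const 0 (d₂ - d₁) (Or.inr hp.le)).tendsto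
      rw [Real.zero_rpow (ne_of_gt hp)] at this
      exact this.mono_left nhdsWithin_le_nhds
    simpa using h0.mul_const (∫ s in m..ν, s ^ (-d₂ - 1) * Pf s)
  -- the main term via dominated convergence
  set G : ℝ → ℝ → ℝ := fun x s =>
    Set.indicator (Set.Ioi x) (fun s => x ^ (d₂ - d₁) * (s ^ (-d₂ - 1) * Pf s)) s with hGdef
  have hbound_int : Integrable (fun s : ℝ => s ^ (-d₁ - 1) * |Pf s|)
      (volume.restrict (Set.Ioo 0 m)) := by
    have h1 : IntegrableOn (fun s : ℝ => s ^ (-d₁ - 1) * Pf s) (Set.Ioo 0 m) :=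
      hint.mono_set (Ioo_subset_Ioo le_rfl hmx₀)
    refine h1.abs.congr ?_
    refine (ae_restrict_iff' measurableSet_Ioo).2 (ae_of_all _ fun s hs => ?_)
    show |s ^ (-d₁ - 1) * Pf s| = s ^ (-d₁ - 1) * |Pf s|
    rw [abs_mul, abs_of_pos (Real.rpow_pos_of_pos hs.1 _)]
  have hmain : Tendsto (fun x : ℝ => ∫ s in Set.Ioo 0 m, G x s)
      (nhdsWithin 0 (Set.Ioi 0)) (nhds 0) := by
    have h0 : Tendsto (fun x : ℝ => ∫ s in Set.Ioo 0 m, G x s)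
        (nhdsWithin 0 (Set.Ioi 0)) (nhds (∫ _ in Set.Ioo 0 m, (0:ℝ))) := ?_
    · simpa using h0
    refine tendsto_integral_filter_of_dominated_convergence
      (fun s => s ^ (-d₁ - 1) * |Pf s|) ?_ ?_ hbound_int ?_
    · refine Eventually.of_forall fun x => ?_
      exact ((hmeas.const_mul _).indicator measurableSet_Ioi).aestronglyMeasurable
    · filter_upwards [Ioo_mem_nhdsGT_of_mem (by simp [hm] : (0:ℝ) ∈ Set.Ico 0 m)] with x hx
      refine (ae_restrict_iff' measurableSet_Ioo).2 (ae_of_all _ fun s hs => ?_)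
      by_cases hsx : s ∈ Set.Ioi x
      · rw [hGdef]
        simp only [Set.indicator_of_mem hsx]
        have hs0 : 0 < s := hs.1
        have hx0 : 0 < x := hx.1
        rw [Real.norm_eq_abs, abs_mul, abs_mul,
          abs_of_pos (Real.rpow_pos_of_pos hx0 _),
          abs_of_pos (Real.rpow_pos_of_pos hs0 _), ← mul_assoc]
        refine mul_le_mul_of_nonneg_right ?_ (abs_nonneg _)
        have hle : x ^ (d₂ - d₁) ≤ s ^ (d₂ - d₁) :=
          Real.rpow_le_rpow (le_of_lt hx0) (le_of_lt hsx) (le_of_lt hp)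
        calc x ^ (d₂ - d₁) * s ^ (-d₂ - 1)
            ≤ s ^ (d₂ - d₁) * s ^ (-d₂ - 1) :=
              mul_le_mul_of_nonneg_right hle (le_of_lt (Real.rpow_pos_of_pos hs0 _))
          _ = s ^ (-d₁ - 1) := by
              rw [← Real.rpow_add hs0]; ring_nf
      · rw [hGdef]
        simp only [Set.indicator_of_notMem hsx, norm_zero]
        exact mul_nonneg (le_of_lt (Real.rpow_pos_of_pos hs.1 _)) (abs_nonneg _)
    · refine (ae_restrict_iff' measurableSet_Ioo).2 (ae_of_all _ fun s hs => ?_)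
      have hev : ∀ᶠ x in nhdsWithin 0 (Set.Ioi 0),
          G x s = x ^ (d₂ - d₁) * (s ^ (-d₂ - 1) * Pf s) := by
        filter_upwards [Ioo_mem_nhdsGT_of_mem
          (by simp [hs.1] : (0:ℝ) ∈ Set.Ico 0 s)] with x hx
        rw [hGdef]
        exact Set.indicator_of_mem hx.2 _
      have h0 : Tendsto (fun x : ℝ => x ^ (d₂ - d₁) * (s ^ (-d₂ - 1) * Pf s))
          (nhdsWithin 0 (Set.Ioi 0)) (nhds 0) := by
        have := (Real.continuousAt_rpow_const 0 (d₂ - d₁) (Or.inr hp.le)).tendsto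
        rw [Real.zero_rpow (ne_of_gt hp)] at this
        simpa using (this.mono_left nhdsWithin_le_nhds).mul_const (s ^ (-d₂ - 1) * Pf s)
      exact h0.congr' (hev.mono fun x h => h.symm)
  -- combine
  have hsum := hmain.add htail
  rw [add_zero] at hsum
  refine hsum.congr' ?_
  filter_upwards [Ioo_mem_nhdsGT_of_mem (by simp [hm] : (0:ℝ) ∈ Set.Ico 0 m)] with x hx
  have hx0 : 0 < x := hx.1
  have hxm : x < m := hx.2
  have hsplit : (∫ s in x..ν, s ^ (-d₂ - 1) * Pf s)
      = (∫ s in x..m, s ^ (-d₂ - 1) * Pf s) + ∫ s in m..ν, s ^ (-d₂ - 1) * Pf s :=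
    (intervalIntegral.integral_add_adjacent_intervals (hfint x m hx0 hm) (hfint m ν hm hν)).symm
  have hGint : (∫ s in Set.Ioo 0 m, G x s)
      = x ^ (d₂ - d₁) * ∫ s in x..m, s ^ (-d₂ - 1) * Pf s := by
    rw [hGdef]
    rw [MeasureTheory.integral_indicator measurableSet_Ioi,
      Measure.restrict_restrict measurableSet_Ioi]
    have hset : Set.Ioi x ∩ Set.Ioo 0 m = Set.Ioo x m := by
      ext s
      simp only [Set.mem_inter_iff, Set.mem_Ioi, Set.mem_Ioo]
      constructor
      · rintro ⟨h1, h2, h3⟩; exact ⟨h1, h3⟩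
      · rintro ⟨h1, h2⟩; exact ⟨h1, lt_trans hx0 h1, h2⟩
    rw [hset, intervalIntegral.integral_of_le (le_of_lt hxm),
      ← MeasureTheory.integral_Ioc_eq_integral_Ioo,
      MeasureTheory.integral_const_mul]
  rw [hsplit, hGint, mul_add]
end

section
/- Let d₁ < d₂ be real numbers, σ ≠ 0, and let Π : (0,∞) → ℝ be Borel measurable and locally integrable on (0,∞). Assume there exists x₁ > 0 such that Π(x) ≥ 0 for a.e. x > x₁. Let x* > 0 be such that s ↦ s^{−d₂−1} Π(s) is Lebesgue integrable on (x*, ∞) with ∫_{x*}^∞ s^{−d₂−1} Π(s) ds = 0. Define v(x) := −2/(σ²(d₂−d₁)) · ∫_{x*}^x ((x/s)^{d₂} − (x/s)^{d₁}) · Π(s)/s ds for x > 0. Then lim_{x→∞} v(x)/x^{d₂} = 0. -/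
open MeasureTheory Set Filter
open scoped Topology

/-- If `Π ≥ 0` a.e. beyond some `x₁ > 0`, `s ↦ s^{−d₂−1} Π(s)` is integrable on
`(x*,∞)` with `∫_{x*}^∞ s^{−d₂−1} Π(s) ds = 0`, then the candidate value function
`v(x) = −2/(σ²(d₂−d₁)) ∫_{x*}^x ((x/s)^{d₂} − (x/s)^{d₁}) Π(s)/s ds` satisfies
`v(x)/x^{d₂} → 0` as `x → ∞`. -/
theorem stmt_9 (d₁ d₂ σ : ℝ) (hd : d₁ < d₂) (hσ : σ ≠ 0)
    (Pf : ℝ → ℝ) (hPm : Measurable Pf)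
    (hloc : LocallyIntegrableOn Pf (Set.Ioi 0))
    (x₁ : ℝ) (hx₁ : 0 < x₁)
    (hsign : ∀ᵐ x ∂(volume.restrict (Set.Ioi x₁)), 0 ≤ Pf x)
    (xs : ℝ) (hxs : 0 < xs)
    (hint : IntegrableOn (fun s : ℝ => s ^ (-d₂ - 1) * Pf s) (Set.Ioi xs))
    (hzero : ∫ s in Set.Ioi xs, s ^ (-d₂ - 1) * Pf s = 0) :
    Tendsto
      (fun x : ℝ =>
        (-2 / (σ ^ 2 * (d₂ - d₁)) *
            ∫ s in xs..x, ((x / s) ^ d₂ - (x / s) ^ d₁) * Pf s / s) / x ^ d₂)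
      atTop (nhds 0) := by
  have hΔ : (0:ℝ) < d₂ - d₁ := sub_pos.2 hd
  set C : ℝ := -2 / (σ ^ 2 * (d₂ - d₁)) with hC
  set g : ℝ → ℝ := fun s => s ^ (-d₂ - 1) * Pf s with hgdef
  set h : ℝ → ℝ := fun s => s ^ (-d₁ - 1) * Pf s with hhdef
  set x₂ : ℝ := max xs x₁ with hx₂def
  have hx₂s : xs ≤ x₂ := le_max_left _ _
  have hx₂1 : x₁ ≤ x₂ := le_max_right _ _
  have hx₂0 : (0:ℝ) < x₂ := lt_of_lt_of_le hxs hx₂s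
  have hhm : Measurable h := by
    have : Measurable fun s : ℝ => s ^ (-d₁ - 1) := by fun_prop
    exact this.mul hPm
  -- interval integrability of h on intervals with positive endpoints
  have hhint : ∀ a b : ℝ, 0 < a → 0 < b → IntervalIntegrable h volume a b := by
    intro a b ha hb
    have hsub : uIcc a b ⊆ Ioi 0 := fun t ht => lt_of_lt_of_le (lt_min ha hb) ht.1
    have hPf : IntervalIntegrable Pf volume a b :=
      (hloc.integrableOn_compact_subset hsub isCompact_uIcc).intervalIntegrable
    exact hPf.continuousOn_mul
      (ContinuousOn.rpow_const continuousOn_id fun t ht => Or.inl (ne_of_gt (hsub ht)))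
  have hgint : ∀ x : ℝ, xs ≤ x → IntervalIntegrable g volume xs x := fun x hx =>
    (intervalIntegrable_iff_integrableOn_Ioc_of_le hx).2 (hint.mono_set Ioc_subset_Ioi_self)
  set K : ℝ := ∫ s in xs..x₂, h s with hK
  set Φ : ℝ → ℝ := fun x =>
    ∫ s in Ioi x₂, (Ioc x₂ x).indicator (fun s => x ^ (d₁ - d₂) * h s) s with hΦ
  -- the eventual rewriting of the function
  have hEq : ∀ᶠ x in atTop,
      (C * ∫ s in xs..x, ((x / s) ^ d₂ - (x / s) ^ d₁) * Pf s / s) / x ^ d₂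
        = C * ((∫ s in xs..x, g s) - x ^ (d₁ - d₂) * K - Φ x) := by
    filter_upwards [eventually_gt_atTop x₂] with x hx
    have hx0 : (0:ℝ) < x := hx₂0.trans hx
    have hxsx : xs ≤ x := hx₂s.trans hx.le
    have h1 : (∫ s in xs..x, ((x / s) ^ d₂ - (x / s) ^ d₁) * Pf s / s)
        = x ^ d₂ * (∫ s in xs..x, g s) - x ^ d₁ * (∫ s in xs..x, h s) := by
      rw [← intervalIntegral.integral_const_mul, ← intervalIntegral.integral_const_mul,
        ← intervalIntegral.integral_sub ((hgint x hxsx).const_mul _)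
          ((hhint xs x hxs hx0).const_mul _)]
      apply intervalIntegral.integral_congr
      intro s hs
      rw [uIcc_of_le hxsx] at hs
      have hs0 : 0 < s := lt_of_lt_of_le hxs hs.1
      have e1 : (x / s) ^ d₂ = x ^ d₂ * (s ^ d₂)⁻¹ := by
        rw [Real.div_rpow hx0.le hs0.le, div_eq_mul_inv]
      have e1' : (x / s) ^ d₁ = x ^ d₁ * (s ^ d₁)⁻¹ := by
        rw [Real.div_rpow hx0.le hs0.le, div_eq_mul_inv]
      have e2 : s ^ (-d₂ - 1) = (s ^ d₂)⁻¹ * s⁻¹ := by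
        rw [show -d₂ - 1 = -d₂ + -1 by ring, Real.rpow_add hs0, Real.rpow_neg_one,
          Real.rpow_neg hs0.le]
      have e3 : s ^ (-d₁ - 1) = (s ^ d₁)⁻¹ * s⁻¹ := by
        rw [show -d₁ - 1 = -d₁ + -1 by ring, Real.rpow_add hs0, Real.rpow_neg_one,
          Real.rpow_neg hs0.le]
      simp only [hgdef, hhdef]
      rw [e1, e1', e2, e3]
      ring
    have h2 : (∫ s in xs..x, h s) = K + ∫ s in x₂..x, h s :=
      (intervalIntegral.integral_add_adjacent_intervals (hhint xs x₂ hxs hx₂0)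
        (hhint x₂ x hx₂0 hx0)).symm
    have h3 : Φ x = x ^ (d₁ - d₂) * ∫ s in x₂..x, h s := by
      simp only [hΦ]
      rw [setIntegral_indicator measurableSet_Ioc,
        Set.inter_eq_right.2 Ioc_subset_Ioi_self, integral_const_mul,
        intervalIntegral.integral_of_le hx.le]
    have hxd₂ : x ^ d₂ ≠ 0 := (Real.rpow_pos_of_pos hx0 d₂).ne'
    have hmul : x ^ (d₁ - d₂) * x ^ d₂ = x ^ d₁ := by
      rw [← Real.rpow_add hx0]; congr 1; ring
    rw [h1, h2, h3, div_eq_iff hxd₂]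
    linear_combination (C * K + C * (∫ s in x₂..x, h s)) * hmul
  -- limits of the pieces
  have tA : Tendsto (fun x : ℝ => ∫ s in xs..x, g s) atTop (𝓝 0) := by
    have := MeasureTheory.intervalIntegral_tendsto_integral_Ioi xs hint tendsto_id
    rw [hzero] at this
    simpa using this
  have tP : Tendsto (fun x : ℝ => x ^ (d₁ - d₂)) atTop (𝓝 0) := by
    simpa [neg_sub] using tendsto_rpow_neg_atTop hΔ
  have hgx₂ : IntegrableOn g (Ioi x₂) volume := hint.mono_set (Ioi_subset_Ioi hx₂s)
  have hsign₂ : ∀ᵐ s ∂(volume.restrict (Ioi x₂)), 0 ≤ Pf s :=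
    ae_restrict_of_ae_restrict_of_subset (Ioi_subset_Ioi hx₂1) hsign
  have hmem : ∀ᵐ s ∂(volume.restrict (Ioi x₂)), s ∈ Ioi x₂ :=
    ae_restrict_mem measurableSet_Ioi
  have tΦ : Tendsto Φ atTop (𝓝 0) := by
    have main := MeasureTheory.tendsto_integral_filter_of_dominated_convergence
      (μ := volume.restrict (Ioi x₂)) (l := atTop)
      (F := fun x s => (Ioc x₂ x).indicator (fun s => x ^ (d₁ - d₂) * h s) s)
      (f := fun _ => (0:ℝ)) g
      (by
        filter_upwards with x
        exact ((hhm.const_mul _).indicator measurableSet_Ioc).aestronglyMeasurable)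
      (by
        filter_upwards [eventually_ge_atTop x₂] with x hxx
        filter_upwards [hsign₂, hmem] with s hPs hsmem
        have hs0 : 0 < s := hx₂0.trans hsmem
        have hgnn : 0 ≤ g s := mul_nonneg (Real.rpow_nonneg hs0.le _) hPs
        by_cases hs : s ∈ Ioc x₂ x
        · rw [Set.indicator_of_mem hs]
          have hx0 : (0:ℝ) < x := hx₂0.trans_le hxx
          have hb : x ^ (d₁ - d₂) * s ^ (-d₁ - 1) ≤ s ^ (-d₂ - 1) := by
            have h1 : x ^ (d₁ - d₂) ≤ s ^ (d₁ - d₂) :=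
              Real.rpow_le_rpow_of_nonpos hs0 hs.2 (by linarith)
            calc x ^ (d₁ - d₂) * s ^ (-d₁ - 1)
                ≤ s ^ (d₁ - d₂) * s ^ (-d₁ - 1) :=
                  mul_le_mul_of_nonneg_right h1 (Real.rpow_nonneg hs0.le _)
              _ = s ^ (-d₂ - 1) := by
                  rw [← Real.rpow_add hs0]; ring_nf
          have hnn : 0 ≤ x ^ (d₁ - d₂) * h s :=
            mul_nonneg (Real.rpow_nonneg hx0.le _)
              (mul_nonneg (Real.rpow_nonneg hs0.le _) hPs)
          rw [Real.norm_eq_abs, abs_of_nonneg hnn]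
          calc x ^ (d₁ - d₂) * h s = (x ^ (d₁ - d₂) * s ^ (-d₁ - 1)) * Pf s := by
                rw [hhdef]; ring
            _ ≤ s ^ (-d₂ - 1) * Pf s := mul_le_mul_of_nonneg_right hb hPs
            _ = g s := rfl
        · rw [Set.indicator_of_notMem hs]
          simpa using hgnn)
      hgx₂
      (by
        filter_upwards [hmem] with s hsmem
        have base : Tendsto (fun x : ℝ => x ^ (d₁ - d₂) * h s) atTop (𝓝 0) := by
          simpa using tP.mul_const (h s)
        refine Tendsto.congr' ?_ base
        filter_upwards [eventually_ge_atTop s] with x hx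
        exact (Set.indicator_of_mem (Set.mem_Ioc.mpr ⟨hsmem, hx⟩) (fun s => x ^ (d₁ - d₂) * h s)).symm)
    simpa using main
  have tK : Tendsto (fun x : ℝ => x ^ (d₁ - d₂) * K) atTop (𝓝 0) := by
    simpa using tP.mul_const K
  have final :
      Tendsto (fun x : ℝ => C * ((∫ s in xs..x, g s) - x ^ (d₁ - d₂) * K - Φ x))
        atTop (𝓝 0) := by
    simpa using ((tA.sub tK).sub tΦ).const_mul C
  exact Tendsto.congr' (by filter_upwards [hEq] with x hx using hx.symm) final
end

section
/- Let σ > 0 and α, r ∈ ℝ with Δ := (σ²/2 − α)² + 2σ²r > 0, and let d₁ < d₂ be the roots of P(d) := (σ²/2)d² + (α − σ²/2)d − r, i.e. d₁ = ((σ²/2 − α) − √Δ)/σ², d₂ = ((σ²/2 − α) + √Δ)/σ². Let x, a > 0 and β ∈ ℝ with β < d₂. Let Φ be the standard normal CDF and define H(t) := Φ( (1/(σ√t))·log(a/x) + σ((d₁+d₂)/2 − β)·√t ) for t > 0. Then lim_{t→∞} x^β e^{P(β)t} (1 − H(t)) = 0. -/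
/-!
Put `c = σ((d₁ + d₂)/2 − β)`, `s = √Δ/σ` and `b = log(a/x)/σ`. Then `P(β) = (c² − s²)/2`, the
argument of `Φ` is `b/√t + c√t`, and `β < d₂` says `−s < c`. If `c ≤ 0` the rate `P(β)` is
negative and `1 − Φ ≤ 1` suffices. If `c > 0` the argument is eventually nonnegative, and the
Chernoff bound `1 − Φ(y) ≤ exp(−y²/2)` absorbs the growth `exp(c²t/2)`, leaving
`exp(−s²t/2 − bc − b²/(2t))`.
-/

open MeasureTheory Set Filter

/-- The standard normal cumulative distribution function. -/
noncomputable def stdNormalCDF (y : ℝ) : ℝ :=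
  ((ProbabilityTheory.gaussianReal 0 1) (Set.Iic y)).toReal

open ProbabilityTheory Real

lemma stdNormalCDF_eq_measureReal (y : ℝ) : stdNormalCDF y = (gaussianReal 0 1).real (Iic y) :=
  rfl

lemma stdNormalCDF_nonneg (y : ℝ) : 0 ≤ stdNormalCDF y := measureReal_nonneg

lemma one_sub_stdNormalCDF (y : ℝ) : 1 - stdNormalCDF y = (gaussianReal 0 1).real (Ioi y) := by
  rw [stdNormalCDF_eq_measureReal, ← compl_Iic, probReal_compl_eq_one_sub measurableSet_Iic]

lemma one_sub_stdNormalCDF_nonneg (y : ℝ) : 0 ≤ 1 - stdNormalCDF y := by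
  rw [one_sub_stdNormalCDF]
  exact measureReal_nonneg

lemma one_sub_stdNormalCDF_le_exp {y : ℝ} (hy : 0 ≤ y) :
    1 - stdNormalCDF y ≤ exp (-y ^ 2 / 2) := by
  have hchernoff := measure_ge_le_exp_mul_mgf (X := id) y hy
    (integrable_exp_mul_gaussianReal (μ := 0) (v := 1) y)
  rw [mgf_id_gaussianReal, ← exp_add] at hchernoff
  calc 1 - stdNormalCDF y = (gaussianReal 0 1).real (Ioi y) := one_sub_stdNormalCDF y
    _ ≤ (gaussianReal 0 1).real {ω | y ≤ id ω} :=
      measureReal_mono fun _ hω => (mem_Ioi.mp hω).le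
    _ ≤ exp (-y ^ 2 / 2) := hchernoff.trans_eq (by congr 1; push_cast; ring)

lemma tendsto_exp_mul_add_atTop_of_neg {l : ℝ} (hl : l < 0) (m : ℝ) :
    Tendsto (fun t => exp (l * t + m)) atTop (nhds 0) :=
  tendsto_exp_atBot.comp <| tendsto_atBot_add_const_right _ m <|
    tendsto_id.const_mul_atTop_of_neg hl

lemma sq_div_sqrt_add_mul_sqrt {t : ℝ} (ht : 0 < t) (b c : ℝ) :
    (b / √t + c * √t) ^ 2 = b ^ 2 / t + 2 * b * c + c ^ 2 * t := by
  have hsqrt : √t ^ 2 = t := sq_sqrt ht.le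
  have hsqrt_ne : √t ≠ 0 := (sqrt_pos.mpr ht).ne'
  field_simp
  rw [hsqrt]
  ring

lemma tendsto_exp_mul_one_sub_stdNormalCDF (b c : ℝ) {s : ℝ} (hs : 0 < s) (hc : -s < c) :
    Tendsto (fun t => exp ((c ^ 2 - s ^ 2) / 2 * t) * (1 - stdNormalCDF (b / √t + c * √t)))
      atTop (nhds 0) := by
  have hnonneg : ∀ t, 0 ≤ exp ((c ^ 2 - s ^ 2) / 2 * t) * (1 - stdNormalCDF (b / √t + c * √t)) :=
    fun t => mul_nonneg (exp_pos _).le (one_sub_stdNormalCDF_nonneg _)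
  rcases le_or_gt c 0 with hc0 | hc0
  · have hrate : (c ^ 2 - s ^ 2) / 2 < 0 := by nlinarith
    refine squeeze_zero hnonneg (fun t => ?_)
      ((tendsto_exp_mul_add_atTop_of_neg hrate 0).congr fun t => by rw [add_zero])
    exact mul_le_of_le_one_right (exp_pos _).le
      (by linarith [stdNormalCDF_nonneg (b / √t + c * √t)])
  · refine squeeze_zero' (.of_forall hnonneg) ?_
      (tendsto_exp_mul_add_atTop_of_neg (by nlinarith : -s ^ 2 / 2 < 0) (-(b * c)))
    filter_upwards [eventually_gt_atTop 0, eventually_ge_atTop (-b / c)] with t ht hbt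
    have harg : 0 ≤ b / √t + c * √t := by
      have hsqrt : 0 < √t := sqrt_pos.mpr ht
      have hcommon : b / √t + c * √t = (b + c * t) / √t := by
        field_simp
        rw [sq_sqrt ht.le]
        ring
      rw [hcommon]
      exact div_nonneg (by linarith [(div_le_iff₀ hc0).mp hbt]) hsqrt.le
    calc exp ((c ^ 2 - s ^ 2) / 2 * t) * (1 - stdNormalCDF (b / √t + c * √t))
        ≤ exp ((c ^ 2 - s ^ 2) / 2 * t) * exp (-(b / √t + c * √t) ^ 2 / 2) := by
          gcongr
          exact one_sub_stdNormalCDF_le_exp harg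
      _ ≤ exp (-s ^ 2 / 2 * t + -(b * c)) := by
          rw [← exp_add, sq_div_sqrt_add_mul_sqrt ht, exp_le_exp]
          nlinarith [div_nonneg (sq_nonneg b) ht.le]

theorem stmt_11_general (σ α r : ℝ) (hσ : 0 < σ)
    (hΔ : 0 < (σ ^ 2 / 2 - α) ^ 2 + 2 * σ ^ 2 * r)
    (d₁ d₂ : ℝ)
    (hd₁ : d₁ = ((σ ^ 2 / 2 - α) - Real.sqrt ((σ ^ 2 / 2 - α) ^ 2 + 2 * σ ^ 2 * r)) / σ ^ 2)
    (hd₂ : d₂ = ((σ ^ 2 / 2 - α) + Real.sqrt ((σ ^ 2 / 2 - α) ^ 2 + 2 * σ ^ 2 * r)) / σ ^ 2)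
    (x a β : ℝ) (hβ : β < d₂) :
    Tendsto
      (fun t : ℝ =>
        x ^ β * Real.exp ((σ ^ 2 / 2 * β ^ 2 + (α - σ ^ 2 / 2) * β - r) * t) *
          (1 - stdNormalCDF
            ((1 / (σ * Real.sqrt t)) * Real.log (a / x) +
              σ * ((d₁ + d₂) / 2 - β) * Real.sqrt t)))
      atTop (nhds 0) := by
  set Δ := (σ ^ 2 / 2 - α) ^ 2 + 2 * σ ^ 2 * r
  have hmid : (d₁ + d₂) / 2 = (σ ^ 2 / 2 - α) / σ ^ 2 := by rw [hd₁, hd₂]; ring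
  have hs : 0 < √Δ / σ := by positivity
  have hd₂mid : d₂ = (d₁ + d₂) / 2 + √Δ / σ / σ := by
    rw [hmid, hd₂]
    field_simp
  have hc : -(√Δ / σ) < σ * ((d₁ + d₂) / 2 - β) :=
    calc -(√Δ / σ) = σ * -(√Δ / σ / σ) := by field_simp
      _ < σ * ((d₁ + d₂) / 2 - β) := by gcongr; linarith
  have hrate : σ ^ 2 / 2 * β ^ 2 + (α - σ ^ 2 / 2) * β - r =
      ((σ * ((d₁ + d₂) / 2 - β)) ^ 2 - (√Δ / σ) ^ 2) / 2 := by
    rw [hmid, div_pow, sq_sqrt hΔ.le]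
    field_simp
    ring
  have hlim := (tendsto_exp_mul_one_sub_stdNormalCDF (log (a / x) / σ) _ hs hc).const_mul (x ^ β)
  rw [mul_zero] at hlim
  refine hlim.congr fun t => ?_
  rw [hrate, ← mul_assoc]
  congr 3
  ring

/-- If `β < d₂`, then `x^β e^{P(β)t} (1 − H(t;a)) → 0` as `t → ∞`, where
`H(t;a) = Φ((1/(σ√t)) log(a/x) + σ((d₁+d₂)/2 − β)√t)`. -/
theorem stmt_11 (σ α r : ℝ) (hσ : 0 < σ)
    (hΔ : 0 < (σ ^ 2 / 2 - α) ^ 2 + 2 * σ ^ 2 * r)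
    (d₁ d₂ : ℝ)
    (hd₁ : d₁ = ((σ ^ 2 / 2 - α) - Real.sqrt ((σ ^ 2 / 2 - α) ^ 2 + 2 * σ ^ 2 * r)) / σ ^ 2)
    (hd₂ : d₂ = ((σ ^ 2 / 2 - α) + Real.sqrt ((σ ^ 2 / 2 - α) ^ 2 + 2 * σ ^ 2 * r)) / σ ^ 2)
    (x a β : ℝ) (hx : 0 < x) (ha : 0 < a) (hβ : β < d₂) :
    Tendsto
      (fun t : ℝ =>
        x ^ β * Real.exp ((σ ^ 2 / 2 * β ^ 2 + (α - σ ^ 2 / 2) * β - r) * t) *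
          (1 - stdNormalCDF
            ((1 / (σ * Real.sqrt t)) * Real.log (a / x) +
              σ * ((d₁ + d₂) / 2 - β) * Real.sqrt t)))
      atTop (nhds 0) :=
  stmt_11_general σ α r hσ hΔ d₁ d₂ hd₁ hd₂ x a β hβ
end

section
/- Let σ > 0 and α, r ∈ ℝ with Δ := (σ²/2 − α)² + 2σ²r > 0, and let d₁ < d₂ be the roots of P(d) := (σ²/2)d² + (α − σ²/2)d − r. Let x, b > 0 and β ∈ ℝ with β > d₁. Let Φ be the standard normal CDF and define H(t) := Φ( (1/(σ√t))·log(b/x) + σ((d₁+d₂)/2 − β)·√t ) for t > 0. Then lim_{t→∞} x^β e^{P(β)t} H(t) = 0. -/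
/-!
Write `c = σ(β - m)` with `m = (d₁ + d₂)/2` and `δ = √Δ/σ`. Completing the square gives
`P(β) = (c² - δ²)/2`, and the argument of `Φ` is `a/√t - c√t` with `a = log(b/x)/σ`.
The Chernoff bound `Φ(y) ≤ exp(λy + λ²/2)` with `λ = max c 0 · √t` bounds the whole expression
by a constant times `exp((P(β) - (max c 0)²/2) t)`, and the exponent is negative exactly
because `-δ < c`, i.e. `β > d₁`.
-/

open MeasureTheory Set Filter

open ProbabilityTheory Real Topology

theorem stdNormalCDF_le_exp_mul_add (y : ℝ) {l : ℝ} (hl : 0 ≤ l) :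
    stdNormalCDF y ≤ exp (l * y + l ^ 2 / 2) := by
  have h := measure_le_le_exp_cgf (X := id) (μ := gaussianReal 0 1) y (neg_nonpos.mpr hl)
    (integrable_exp_mul_gaussianReal _)
  rw [cgf_gaussianReal (μ := 0) (v := 1) (by simp)] at h
  convert h using 2 <;> simp [stdNormalCDF, Measure.real, Iic]

theorem tendsto_mul_exp_mul_stdNormalCDF {K P a c : ℝ} (hK : 0 ≤ K)
    (hP : P < max c 0 ^ 2 / 2) :
    Tendsto (fun t => K * exp (P * t) * stdNormalCDF (a / √t - c * √t)) atTop (𝓝 0) := by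
  set l := max c 0
  have hbound : ∀ t > 0,
      stdNormalCDF (a / √t - c * √t) ≤ exp (l * a) * exp (-(l ^ 2 / 2) * t) := by
    intro t ht
    have hs : √t ^ 2 = t := sq_sqrt ht.le
    have hs0 : √t ≠ 0 := by positivity
    have hcl : c * l = l ^ 2 := by
      rcases le_total c 0 with h | h <;> simp [l, h]; ring
    calc stdNormalCDF (a / √t - c * √t)
        ≤ exp (l * √t * (a / √t - c * √t) + (l * √t) ^ 2 / 2) :=
          stdNormalCDF_le_exp_mul_add _ (by positivity)
      _ = exp (l * a) * exp (-(l ^ 2 / 2) * t) := by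
          rw [← exp_add]
          congr 1
          field_simp
          linear_combination (-(2 : ℝ) * t) * hcl + (l ^ 2 - 2 * c * l) * hs
  have hdecay : Tendsto (fun t => K * exp (l * a) * exp ((P - l ^ 2 / 2) * t)) atTop (𝓝 0) := by
    simpa using (tendsto_exp_atBot.comp
      (tendsto_id.const_mul_atTop_of_neg (sub_neg.mpr hP))).const_mul (K * exp (l * a))
  refine squeeze_zero' (Eventually.of_forall fun t =>
    mul_nonneg (mul_nonneg hK (exp_pos _).le) ENNReal.toReal_nonneg) ?_ hdecay
  filter_upwards [eventually_gt_atTop 0] with t ht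
  calc K * exp (P * t) * stdNormalCDF (a / √t - c * √t)
      ≤ K * exp (P * t) * (exp (l * a) * exp (-(l ^ 2 / 2) * t)) := by
        gcongr
        exact hbound t ht
    _ = K * exp (l * a) * exp ((P - l ^ 2 / 2) * t) := by
        rw [show (P - l ^ 2 / 2) * t = P * t + -(l ^ 2 / 2) * t by ring, exp_add]
        ring

theorem sq_sub_sq_lt_max_sq {c δ : ℝ} (hδ : 0 < δ) (hc : -δ < c) :
    c ^ 2 - δ ^ 2 < max c 0 ^ 2 := by
  rcases le_total c 0 with h | h
  · rw [max_eq_right h]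
    nlinarith
  · rw [max_eq_left h]
    nlinarith

theorem stmt_12_general (σ α r : ℝ) (hσ : 0 < σ)
    (hΔ : 0 < (σ ^ 2 / 2 - α) ^ 2 + 2 * σ ^ 2 * r)
    (d₁ d₂ : ℝ)
    (hd₁ : d₁ = ((σ ^ 2 / 2 - α) - Real.sqrt ((σ ^ 2 / 2 - α) ^ 2 + 2 * σ ^ 2 * r)) / σ ^ 2)
    (hd₂ : d₂ = ((σ ^ 2 / 2 - α) + Real.sqrt ((σ ^ 2 / 2 - α) ^ 2 + 2 * σ ^ 2 * r)) / σ ^ 2)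
    (x b β : ℝ) (hx : 0 < x) (hβ : d₁ < β) :
    Tendsto
      (fun t : ℝ =>
        x ^ β * Real.exp ((σ ^ 2 / 2 * β ^ 2 + (α - σ ^ 2 / 2) * β - r) * t) *
          stdNormalCDF
            ((1 / (σ * Real.sqrt t)) * Real.log (b / x) +
              σ * ((d₁ + d₂) / 2 - β) * Real.sqrt t))
      atTop (nhds 0) := by
  set s := √((σ ^ 2 / 2 - α) ^ 2 + 2 * σ ^ 2 * r)
  have hs : s ^ 2 = (σ ^ 2 / 2 - α) ^ 2 + 2 * σ ^ 2 * r := sq_sqrt hΔ.le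
  set m := (σ ^ 2 / 2 - α) / σ ^ 2
  have hmid : (d₁ + d₂) / 2 = m := by rw [hd₁, hd₂]; ring
  have hd₁m : σ * (d₁ - m) = -(s / σ) := by rw [hd₁]; simp only [m]; field_simp; ring
  have hP : σ ^ 2 / 2 * β ^ 2 + (α - σ ^ 2 / 2) * β - r
      = ((σ * (β - m)) ^ 2 - (s / σ) ^ 2) / 2 := by
    simp only [m]; field_simp; linear_combination 4 * hs
  have hβm : -(s / σ) < σ * (β - m) := by
    rw [← hd₁m]; exact mul_lt_mul_of_pos_left (by linarith) hσ
  have harg : ∀ t, 1 / (σ * √t) * log (b / x) + σ * ((d₁ + d₂) / 2 - β) * √t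
      = log (b / x) / σ / √t - σ * (β - m) * √t := fun t => by rw [hmid]; ring
  simp only [harg, hP]
  refine tendsto_mul_exp_mul_stdNormalCDF (rpow_nonneg hx.le β) ?_
  linarith [sq_sub_sq_lt_max_sq (by positivity : 0 < s / σ) hβm]

/-- If `β > d₁`, then `x^β e^{P(β)t} H(t;b) → 0` as `t → ∞`, where
`H(t;b) = Φ((1/(σ√t)) log(b/x) + σ((d₁+d₂)/2 − β)√t)`. -/
theorem stmt_12 (σ α r : ℝ) (hσ : 0 < σ)
    (hΔ : 0 < (σ ^ 2 / 2 - α) ^ 2 + 2 * σ ^ 2 * r)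
    (d₁ d₂ : ℝ)
    (hd₁ : d₁ = ((σ ^ 2 / 2 - α) - Real.sqrt ((σ ^ 2 / 2 - α) ^ 2 + 2 * σ ^ 2 * r)) / σ ^ 2)
    (hd₂ : d₂ = ((σ ^ 2 / 2 - α) + Real.sqrt ((σ ^ 2 / 2 - α) ^ 2 + 2 * σ ^ 2 * r)) / σ ^ 2)
    (x b β : ℝ) (hx : 0 < x) (hb : 0 < b) (hβ : d₁ < β) :
    Tendsto
      (fun t : ℝ =>
        x ^ β * Real.exp ((σ ^ 2 / 2 * β ^ 2 + (α - σ ^ 2 / 2) * β - r) * t) *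
          stdNormalCDF
            ((1 / (σ * Real.sqrt t)) * Real.log (b / x) +
              σ * ((d₁ + d₂) / 2 - β) * Real.sqrt t))
      atTop (nhds 0) :=
  stmt_12_general σ α r hσ hΔ d₁ d₂ hd₁ hd₂ x b β hx hβ
end

section
/- Let σ > 0 and α, r ∈ ℝ with Δ := (σ²/2 − α)² + 2σ²r > 0, and let d₁ < d₂ be the roots of P(d) := (σ²/2)d² + (α − σ²/2)d − r (so P(0) = −r). Let x, a, b > 0. Let Φ be the standard normal CDF and define, for c > 0 and t > 0, H(t; c) := Φ( (1/(σ√t))·log(c/x) + σ((d₁+d₂)/2)·√t ). Then lim_{t→∞} e^{−rt} ( H(t; b) − H(t; a) ) = 0. -/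
open MeasureTheory Set Filter ProbabilityTheory Real
open scoped Interval Topology

lemma stdNormalCDF_eq_integral (y : ℝ) :
    stdNormalCDF y = ∫ ξ in Iic y, gaussianPDFReal 0 1 ξ := by
  rw [stdNormalCDF, gaussianReal_apply_eq_integral 0 one_ne_zero, ENNReal.toReal_ofReal]
  exact setIntegral_nonneg measurableSet_Iic fun ξ _ => gaussianPDFReal_nonneg 0 1 ξ

lemma stdNormalCDF_sub_eq_intervalIntegral (q p : ℝ) :
    stdNormalCDF p - stdNormalCDF q = ∫ ξ in q..p, gaussianPDFReal 0 1 ξ := by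
  rw [stdNormalCDF_eq_integral, stdNormalCDF_eq_integral]
  exact intervalIntegral.integral_Iic_sub_Iic (integrable_gaussianPDFReal 0 1).integrableOn
    (integrable_gaussianPDFReal 0 1).integrableOn

lemma abs_stdNormalCDF_sub_le {q p D : ℝ} (hD : ∀ ξ ∈ Ι q p, gaussianPDFReal 0 1 ξ ≤ D) :
    |stdNormalCDF p - stdNormalCDF q| ≤ D * |p - q| := by
  rw [stdNormalCDF_sub_eq_intervalIntegral]
  refine intervalIntegral.norm_integral_le_of_norm_le_const (f := gaussianPDFReal 0 1)
    fun ξ hξ => ?_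
  rw [norm_of_nonneg (gaussianPDFReal_nonneg 0 1 ξ)]
  exact hD ξ hξ

lemma gaussianPDFReal_le_of_abs_sub_le {c L ξ : ℝ} (h : |ξ - c| ≤ L) :
    gaussianPDFReal 0 1 ξ ≤ (√(2 * π))⁻¹ * exp (-c ^ 2 / 2 + |c| * L) := by
  have hcross : -(c * (ξ - c)) ≤ |c| * L :=
    (neg_le_abs _).trans (by rw [abs_mul]; gcongr)
  have hsq : c ^ 2 - 2 * (|c| * L) ≤ ξ ^ 2 := by nlinarith [sq_nonneg (ξ - c)]
  rw [gaussianPDFReal]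
  simp only [NNReal.coe_one, mul_one, sub_zero]
  gcongr
  linarith

lemma abs_stdNormalCDF_sub_le_of_abs_sub_le {c L p q : ℝ} (hp : |p - c| ≤ L)
    (hq : |q - c| ≤ L) :
    |stdNormalCDF p - stdNormalCDF q| ≤
      2 * L * (√(2 * π))⁻¹ * exp (-c ^ 2 / 2 + |c| * L) := by
  rw [abs_sub_le_iff] at hp hq
  have hwindow : Ι q p ⊆ Icc (c - L) (c + L) :=
    uIoc_subset_uIcc.trans <|
      uIcc_subset_Icc ⟨by linarith, by linarith⟩ ⟨by linarith, by linarith⟩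
  have hpq : |p - q| ≤ 2 * L := abs_sub_le_iff.2 ⟨by linarith, by linarith⟩
  calc |stdNormalCDF p - stdNormalCDF q|
      ≤ (√(2 * π))⁻¹ * exp (-c ^ 2 / 2 + |c| * L) * |p - q| := by
        refine abs_stdNormalCDF_sub_le fun ξ hξ => gaussianPDFReal_le_of_abs_sub_le ?_
        obtain ⟨hlo, hhi⟩ := hwindow hξ
        exact abs_sub_le_iff.2 ⟨by linarith, by linarith⟩
    _ ≤ (√(2 * π))⁻¹ * exp (-c ^ 2 / 2 + |c| * L) * (2 * L) := by gcongr
    _ = 2 * L * (√(2 * π))⁻¹ * exp (-c ^ 2 / 2 + |c| * L) := by ring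

lemma tendsto_exp_neg_mul_add_mul_sqrt {κ : ℝ} (hκ : 0 < κ) (β : ℝ) :
    Tendsto (fun t => exp (-κ * t + β * √t)) atTop (𝓝 0) := by
  refine tendsto_exp_atBot.comp <|
    tendsto_atBot_mono' atTop (f₁ := fun t => -(κ / 2) * t + β ^ 2 / (2 * κ)) ?_ ?_
  · -- AM-GM: `β u ≤ κ u² / 2 + β² / (2κ)` with `u = √t`
    filter_upwards [eventually_ge_atTop 0] with t ht
    obtain ⟨u, hu, rfl⟩ : ∃ u, 0 ≤ u ∧ t = u ^ 2 :=
      ⟨√t, sqrt_nonneg t, (sq_sqrt ht).symm⟩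
    have hsq : 2 * κ * ((-(κ / 2) * u ^ 2 + β ^ 2 / (2 * κ)) - (-κ * u ^ 2 + β * u)) =
        (κ * u - β) ^ 2 := by
      field_simp
      ring
    have := (mul_nonneg_iff_of_pos_left (by positivity)).1 (hsq ▸ sq_nonneg (κ * u - β))
    rw [sqrt_sq hu]
    linarith
  · exact tendsto_atBot_add_const_right _ _
      (tendsto_id.const_mul_atTop_of_neg (by linarith))

lemma abs_one_div_mul_sqrt_mul_le {σ t : ℝ} (hσ : 0 < σ) (ht : 1 ≤ t) (y : ℝ) :
    |1 / (σ * √t) * y| ≤ |y| / σ := by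
  have hsqrt : 1 ≤ √t := one_le_sqrt.2 ht
  rw [abs_mul, abs_of_pos (by positivity), one_div, div_eq_inv_mul]
  gcongr
  exact le_mul_of_one_le_right hσ.le hsqrt

theorem stmt_13_general (σ α r : ℝ) (hσ : 0 < σ)
    (hΔ : 0 < (σ ^ 2 / 2 - α) ^ 2 + 2 * σ ^ 2 * r)
    (d₁ d₂ : ℝ)
    (hd₁ : d₁ = ((σ ^ 2 / 2 - α) - Real.sqrt ((σ ^ 2 / 2 - α) ^ 2 + 2 * σ ^ 2 * r)) / σ ^ 2)
    (hd₂ : d₂ = ((σ ^ 2 / 2 - α) + Real.sqrt ((σ ^ 2 / 2 - α) ^ 2 + 2 * σ ^ 2 * r)) / σ ^ 2)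
    (x a b : ℝ) :
    Tendsto
      (fun t : ℝ =>
        Real.exp (-r * t) *
          (stdNormalCDF
              ((1 / (σ * Real.sqrt t)) * Real.log (b / x) +
                σ * ((d₁ + d₂) / 2) * Real.sqrt t) -
            stdNormalCDF
              ((1 / (σ * Real.sqrt t)) * Real.log (a / x) +
                σ * ((d₁ + d₂) / 2) * Real.sqrt t)))
      atTop (nhds 0) := by
  set s := σ * ((d₁ + d₂) / 2)
  have hκ : 0 < r + s ^ 2 / 2 := by
    have : r + s ^ 2 / 2 = ((σ ^ 2 / 2 - α) ^ 2 + 2 * σ ^ 2 * r) / (2 * σ ^ 2) := by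
      simp only [s, hd₁, hd₂]; field_simp; ring
    rw [this]; positivity
  set L := max |log (b / x)| |log (a / x)| / σ
  have hwindow : ∀ t, 1 ≤ t → ∀ y, |y| ≤ max |log (b / x)| |log (a / x)| →
      |1 / (σ * √t) * y + s * √t - s * √t| ≤ L := fun t ht y hy => by
    rw [add_sub_cancel_right]
    exact (abs_one_div_mul_sqrt_mul_le hσ ht y).trans (div_le_div_of_nonneg_right hy hσ.le)
  have hbound :=
    (tendsto_exp_neg_mul_add_mul_sqrt hκ (|s| * L)).const_mul (2 * L * (√(2 * π))⁻¹)
  rw [mul_zero] at hbound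
  refine squeeze_zero_norm' ?_ hbound
  filter_upwards [eventually_ge_atTop 1] with t ht
  have hdiff := abs_stdNormalCDF_sub_le_of_abs_sub_le
    (hwindow t ht _ (le_max_left _ _)) (hwindow t ht _ (le_max_right _ _))
  rw [norm_mul, norm_of_nonneg (exp_pos _).le, norm_eq_abs]
  calc exp (-r * t) * |_|
      ≤ exp (-r * t) * (2 * L * (√(2 * π))⁻¹ * exp (-(s * √t) ^ 2 / 2 + |s * √t| * L)) := by
        gcongr
    _ = 2 * L * (√(2 * π))⁻¹ * exp (-(r + s ^ 2 / 2) * t + |s| * L * √t) := by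
        rw [mul_pow, sq_sqrt (by linarith), abs_mul, abs_of_nonneg (sqrt_nonneg t),
          mul_left_comm, ← exp_add]
        ring_nf

/-- For any `a, b > 0`, `e^{−rt}(H(t;b) − H(t;a)) → 0` as `t → ∞`, where
`H(t;c) = Φ((1/(σ√t)) log(c/x) + σ(d₁+d₂)/2·√t)` (case `β = 0`; `r` may be negative). -/
theorem stmt_13 (σ α r : ℝ) (hσ : 0 < σ)
    (hΔ : 0 < (σ ^ 2 / 2 - α) ^ 2 + 2 * σ ^ 2 * r)
    (d₁ d₂ : ℝ)
    (hd₁ : d₁ = ((σ ^ 2 / 2 - α) - Real.sqrt ((σ ^ 2 / 2 - α) ^ 2 + 2 * σ ^ 2 * r)) / σ ^ 2)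
    (hd₂ : d₂ = ((σ ^ 2 / 2 - α) + Real.sqrt ((σ ^ 2 / 2 - α) ^ 2 + 2 * σ ^ 2 * r)) / σ ^ 2)
    (x a b : ℝ) (hx : 0 < x) (ha : 0 < a) (hb : 0 < b) :
    Tendsto
      (fun t : ℝ =>
        Real.exp (-r * t) *
          (stdNormalCDF
              ((1 / (σ * Real.sqrt t)) * Real.log (b / x) +
                σ * ((d₁ + d₂) / 2) * Real.sqrt t) -
            stdNormalCDF
              ((1 / (σ * Real.sqrt t)) * Real.log (a / x) +
                σ * ((d₁ + d₂) / 2) * Real.sqrt t)))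
      atTop (nhds 0) :=
  stmt_13_general σ α r hσ hΔ d₁ d₂ hd₁ hd₂ x a b
end

section
/- Let σ > 0 and α, r ∈ ℝ with Δ := (σ²/2 − α)² + 2σ²r > 0, and let d₁ < d₂ be the roots of P(d) := (σ²/2)d² + (α − σ²/2)d − r. Let Π : (0,∞) → ℝ be Borel measurable and locally integrable, and suppose there is x₁ₗ > 0 such that Π(x) < 0 for a.e. x ∈ (0, x₁ₗ), Π(x) ≥ 0 for a.e. x ≥ x₁ₗ, and Π is not a.e. zero on (x₁ₗ, ∞). Assume s ↦ s^{−d₂−1} Π(s) is Lebesgue integrable on (w, ∞) for every w > 0. Define γ := inf{ x > 0 : ∃ C > x, ∫_x^C ((C/s)^{d₂} − (C/s)^{d₁}) · Π(s)/s ds ≥ 0 }. If γ > 0, then ∫_γ^∞ s^{−d₂−1} Π(s) ds = 0. -/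
/-!
Write `f s = s ^ (-d₂ - 1) * Π s`, `F x = ∫_x^∞ f` and `k = d₂ - d₁ > 0`. The kernel integral
defining the candidate set is `C ^ d₂ * ∫_x^C (1 - (s / C) ^ k) f s ds`. If `F x < 0` this is
negative for every `C > x`: `f` is negative before `x₁` and nonnegative after it, while the weight
`1 - (s / C) ^ k` decreases, so the integral is at most `(1 - (x₁ / C) ^ k) * F x`. If `F x > 0`,
dominated convergence makes it tend to `F x` as `C → ∞`, so it is eventually positive. Hence the
candidate set lies in `{F ≥ 0}` and contains `{F > 0}`, and the continuous function `F` vanishes at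
its infimum `γ`.
-/

open MeasureTheory Set Filter Topology

theorem setIntegral_Ioc_neg_of_ae_neg {g : ℝ → ℝ} {a b : ℝ} (hab : a < b)
    (hg : IntegrableOn g (Ioc a b)) (hneg : ∀ᵐ s ∂volume.restrict (Ioc a b), g s < 0) :
    ∫ s in Ioc a b, g s < 0 := by
  have hsupp : Function.support (-g) =ᵐ[volume.restrict (Ioc a b)] (univ : Set ℝ) := by
    refine ae_eq_univ.2 (measure_mono_null (fun s hs => ?_) (ae_iff.1 hneg))
    simp_all
  have hpos : 0 < ∫ s in Ioc a b, (-g) s := by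
    rw [integral_pos_iff_support_of_nonneg_ae (hneg.mono fun s hs => by simp [hs.le]) hg.neg,
      measure_congr hsupp, Measure.restrict_apply_univ, Real.volume_Ioc]
    exact ENNReal.ofReal_pos.2 (sub_pos.2 hab)
  simpa [integral_neg] using hpos

theorem abs_one_sub_rpow_div_le_one {k s C : ℝ} (hk : 0 ≤ k) (hs : 0 ≤ s) (hsC : s ≤ C) :
    |1 - (s / C) ^ k| ≤ 1 := by
  have h0 : 0 ≤ (s / C) ^ k := Real.rpow_nonneg (div_nonneg hs (hs.trans hsC)) k
  have h1 : (s / C) ^ k ≤ 1 :=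
    Real.rpow_le_one (div_nonneg hs (hs.trans hsC)) (div_le_one_of_le₀ hsC (hs.trans hsC)) hk
  exact abs_le.2 ⟨by linarith, by linarith⟩

theorem integrableOn_one_sub_rpow_div_mul {f : ℝ → ℝ} {k x C : ℝ} (hk : 0 ≤ k) (hx : 0 ≤ x)
    (hf : IntegrableOn f (Ioc x C)) :
    IntegrableOn (fun s => (1 - (s / C) ^ k) * f s) (Ioc x C) := by
  refine Integrable.bdd_mul (c := 1) hf (by fun_prop) ?_
  filter_upwards [ae_restrict_mem measurableSet_Ioc] with s hs
  exact abs_one_sub_rpow_div_le_one hk (hx.trans hs.1.le) hs.2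

theorem tendsto_integral_Ioc_one_sub_rpow_div_mul {f : ℝ → ℝ} {k x : ℝ} (hk : 0 < k)
    (hx : 0 ≤ x) (hf : IntegrableOn f (Ioi x)) :
    Tendsto (fun C => ∫ s in Ioc x C, (1 - (s / C) ^ k) * f s) atTop
      (𝓝 (∫ s in Ioi x, f s)) := by
  have hind : ∀ C, ∫ s in Ioc x C, (1 - (s / C) ^ k) * f s
      = ∫ s in Ioi x, (Iic C).indicator (fun s => (1 - (s / C) ^ k) * f s) s := fun C => by
    rw [setIntegral_indicator measurableSet_Iic, Ioi_inter_Iic]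
  simp_rw [hind]
  refine tendsto_integral_filter_of_dominated_convergence (fun s => ‖f s‖)
    (Eventually.of_forall fun C => ?_) (Eventually.of_forall fun C => ?_) hf.norm ?_
  · exact (((by fun_prop : Measurable fun s : ℝ => 1 - (s / C) ^ k).aestronglyMeasurable).mul
      hf.aestronglyMeasurable).indicator measurableSet_Iic
  · filter_upwards [ae_restrict_mem measurableSet_Ioi] with s hs
    by_cases hsC : s ≤ C
    · rw [indicator_of_mem (mem_Iic.2 hsC), norm_mul]
      exact mul_le_of_le_one_left (norm_nonneg _)
        (abs_one_sub_rpow_div_le_one hk.le (hx.trans hs.le) hsC)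
    · simp [indicator_of_notMem (mt mem_Iic.1 hsC)]
  · filter_upwards [ae_restrict_mem measurableSet_Ioi] with s hs
    have hpow : Tendsto (fun C : ℝ => (s / C) ^ k) atTop (𝓝 0) := by
      have h := (Real.continuousAt_rpow_const 0 k (Or.inr hk.le)).tendsto.comp
        (tendsto_const_nhds.div_atTop tendsto_id : Tendsto (fun C : ℝ => s / C) atTop (𝓝 0))
      rwa [Real.zero_rpow hk.ne'] at h
    have hlim : Tendsto (fun C : ℝ => (1 - (s / C) ^ k) * f s) atTop (𝓝 (f s)) := by
      simpa using ((tendsto_const_nhds (x := (1 : ℝ))).sub hpow).mul_const (f s)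
    refine hlim.congr' ?_
    filter_upwards [eventually_ge_atTop s] with C hC
    rw [indicator_of_mem (mem_Iic.2 hC)]

theorem integral_Ioc_one_sub_rpow_div_mul_neg {f : ℝ → ℝ} {k x x₁ C : ℝ} (hk : 0 < k)
    (hx : 0 ≤ x) (hxC : x < C) (hf : IntegrableOn f (Ioi x))
    (hneg : ∀ᵐ s ∂volume.restrict (Ioo x x₁), f s < 0)
    (hpos : ∀ᵐ s ∂volume.restrict (Ici x₁), 0 ≤ f s) (hF : ∫ s in Ioi x, f s < 0) :
    ∫ s in Ioc x C, (1 - (s / C) ^ k) * f s < 0 := by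
  have hC : 0 < C := hx.trans_lt hxC
  have hfC : IntegrableOn f (Ioc x C) := hf.mono_set Ioc_subset_Ioi_self
  rcases le_or_gt C x₁ with hCx₁ | hx₁C
  · refine setIntegral_Ioc_neg_of_ae_neg hxC (integrableOn_one_sub_rpow_div_mul hk.le hx hfC) ?_
    rw [← Measure.restrict_congr_set Ioo_ae_eq_Ioc]
    filter_upwards [ae_restrict_mem measurableSet_Ioo,
      ae_restrict_of_ae_restrict_of_subset (Ioo_subset_Ioo_right hCx₁) hneg] with s hs hfs
    have hs0 : 0 < s := hx.trans_lt hs.1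
    have hw : (s / C) ^ k < 1 :=
      Real.rpow_lt_one (div_pos hs0 hC).le ((div_lt_one hC).2 hs.2) hk
    exact mul_neg_of_pos_of_neg (sub_pos.2 hw) hfs
  have hxx₁ : x < x₁ := by
    by_contra! h
    have := setIntegral_nonneg_of_ae_restrict
      (ae_restrict_of_ae_restrict_of_subset (Ioi_subset_Ici h) hpos)
    linarith
  have hx₁ : 0 < x₁ := hx.trans_lt hxx₁
  have hmono : ∀ s t, 0 ≤ s → s ≤ t → (s / C) ^ k ≤ (t / C) ^ k := fun s t hs hst =>
    Real.rpow_le_rpow (div_nonneg hs hC.le) (div_le_div_of_nonneg_right hst hC.le) hk.le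
  have hw₁ : 0 < 1 - (x₁ / C) ^ k :=
    sub_pos.2 (Real.rpow_lt_one (div_pos hx₁ hC).le ((div_lt_one hC).2 hx₁C) hk)
  have hle : ∀ᵐ s ∂volume.restrict (Ioc x C),
      (1 - (s / C) ^ k) * f s ≤ (1 - (x₁ / C) ^ k) * f s := by
    rw [ae_restrict_iff' measurableSet_Ioc]
    filter_upwards [(ae_restrict_iff' measurableSet_Ioo).1 hneg,
      (ae_restrict_iff' measurableSet_Ici).1 hpos] with s hsneg hspos hs
    rcases lt_or_ge s x₁ with hsx₁ | hx₁s
    · exact mul_le_mul_of_nonpos_right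
        (by linarith [hmono s x₁ (hx.trans hs.1.le) hsx₁.le]) (hsneg ⟨hs.1, hsx₁⟩).le
    · exact mul_le_mul_of_nonneg_right (by linarith [hmono x₁ s hx₁.le hx₁s]) (hspos hx₁s)
  have htail : ∫ s in Ioc x C, f s ≤ ∫ s in Ioi x, f s := by
    rw [← intervalIntegral.integral_of_le hxC.le,
      ← intervalIntegral.integral_Ioi_sub_Ioi hf hxC.le, sub_le_self_iff]
    exact setIntegral_nonneg_of_ae_restrict
      (ae_restrict_of_ae_restrict_of_subset (Ioi_subset_Ici hx₁C.le) hpos)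
  calc ∫ s in Ioc x C, (1 - (s / C) ^ k) * f s
      ≤ ∫ s in Ioc x C, (1 - (x₁ / C) ^ k) * f s :=
        setIntegral_mono_ae_restrict (integrableOn_one_sub_rpow_div_mul hk.le hx hfC)
          (hfC.const_mul _) hle
    _ = (1 - (x₁ / C) ^ k) * ∫ s in Ioc x C, f s := integral_const_mul _ _
    _ ≤ (1 - (x₁ / C) ^ k) * ∫ s in Ioi x, f s := mul_le_mul_of_nonneg_left htail hw₁.le
    _ < 0 := mul_neg_of_pos_of_neg hw₁ hF

theorem apply_sInf_eq_zero {F : ℝ → ℝ} {S : Set ℝ} (hS : S.Nonempty) (hbdd : BddBelow S)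
    (hpos : 0 < sInf S) (hF : ContinuousAt F (sInf S)) (hnonneg : ∀ x ∈ S, 0 ≤ F x)
    (hmem : ∀ x, 0 < x → 0 < F x → x ∈ S) : F (sInf S) = 0 := by
  refine le_antisymm ?_ ?_
  · by_contra! h
    obtain ⟨x, ⟨hFx, hx⟩, hxS⟩ := (((hF.eventually (lt_mem_nhds h)).and
      (lt_mem_nhds hpos)).filter_mono nhdsWithin_le_nhds |>.and
      (self_mem_nhdsWithin : Iio (sInf S) ∈ 𝓝[<] sInf S)).exists
    exact (csInf_le hbdd (hmem x hx hFx)).not_gt hxS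
  · have hcl : F (sInf S) ∈ closure (F '' S) := mem_closure_image hF (csInf_mem_closure hS hbdd)
    exact closure_minimal (image_subset_iff.2 hnonneg) isClosed_Ici hcl

theorem rpow_div_sub_rpow_div_mul_div {d₁ d₂ s C : ℝ} (P : ℝ) (hs : 0 < s) (hC : 0 < C) :
    ((C / s) ^ d₂ - (C / s) ^ d₁) * P / s
      = C ^ d₂ * ((1 - (s / C) ^ (d₂ - d₁)) * (s ^ (-d₂ - 1) * P)) := by
  rw [Real.div_rpow hC.le hs.le, Real.div_rpow hC.le hs.le, Real.div_rpow hs.le hC.le,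
    Real.rpow_sub hs, Real.rpow_sub hC, Real.rpow_sub hs, Real.rpow_neg hs.le, Real.rpow_one]
  have := (Real.rpow_pos_of_pos hs d₁).ne'
  have := (Real.rpow_pos_of_pos hs d₂).ne'
  have := (Real.rpow_pos_of_pos hC d₁).ne'
  have := (Real.rpow_pos_of_pos hC d₂).ne'
  field_simp

theorem intervalIntegral_kernel_eq {P : ℝ → ℝ} {d₁ d₂ x C : ℝ} (hx : 0 < x) (hxC : x ≤ C) :
    ∫ s in x..C, ((C / s) ^ d₂ - (C / s) ^ d₁) * P s / s
      = C ^ d₂ * ∫ s in Ioc x C, (1 - (s / C) ^ (d₂ - d₁)) * (s ^ (-d₂ - 1) * P s) := by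
  rw [intervalIntegral.integral_of_le hxC, ← integral_const_mul]
  exact setIntegral_congr_fun measurableSet_Ioc fun s hs =>
    rpow_div_sub_rpow_div_mul_div (P s) (hx.trans hs.1) (hx.trans_le (hs.1.le.trans hs.2))

theorem intervalIntegral_kernel_neg {P : ℝ → ℝ} {d₁ d₂ x x₁ C : ℝ} (hd : d₁ < d₂) (hx : 0 < x)
    (hx₁ : 0 ≤ x₁) (hxC : x < C) (hint : IntegrableOn (fun s => s ^ (-d₂ - 1) * P s) (Ioi x))
    (hneg : ∀ᵐ s ∂volume.restrict (Ioo x x₁), P s < 0)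
    (hpos : ∀ᵐ s ∂volume.restrict (Ici x₁), 0 ≤ P s)
    (hF : ∫ s in Ioi x, s ^ (-d₂ - 1) * P s < 0) :
    ∫ s in x..C, ((C / s) ^ d₂ - (C / s) ^ d₁) * P s / s < 0 := by
  have hfneg : ∀ᵐ s ∂volume.restrict (Ioo x x₁), s ^ (-d₂ - 1) * P s < 0 := by
    filter_upwards [ae_restrict_mem measurableSet_Ioo, hneg] with s hs hPs
    exact mul_neg_of_pos_of_neg (Real.rpow_pos_of_pos (hx.trans hs.1) _) hPs
  have hfpos : ∀ᵐ s ∂volume.restrict (Ici x₁), 0 ≤ s ^ (-d₂ - 1) * P s := by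
    filter_upwards [ae_restrict_mem measurableSet_Ici, hpos] with s hs hPs
    exact mul_nonneg (Real.rpow_nonneg (hx₁.trans hs) _) hPs
  rw [intervalIntegral_kernel_eq hx hxC.le]
  exact mul_neg_of_pos_of_neg (Real.rpow_pos_of_pos (hx.trans hxC) _)
    (integral_Ioc_one_sub_rpow_div_mul_neg (sub_pos.2 hd) hx.le hxC hint hfneg hfpos hF)

theorem exists_intervalIntegral_kernel_pos {P : ℝ → ℝ} {d₁ d₂ x : ℝ} (hd : d₁ < d₂) (hx : 0 < x)
    (hint : IntegrableOn (fun s => s ^ (-d₂ - 1) * P s) (Ioi x))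
    (hF : 0 < ∫ s in Ioi x, s ^ (-d₂ - 1) * P s) :
    ∃ C, x < C ∧ 0 < ∫ s in x..C, ((C / s) ^ d₂ - (C / s) ^ d₁) * P s / s := by
  obtain ⟨C, hxC, hI⟩ := ((eventually_gt_atTop x).and
    ((tendsto_integral_Ioc_one_sub_rpow_div_mul (sub_pos.2 hd) hx.le hint).eventually_const_lt
      hF)).exists
  refine ⟨C, hxC, ?_⟩
  rw [intervalIntegral_kernel_eq hx hxC.le]
  exact mul_pos (Real.rpow_pos_of_pos (hx.trans hxC) _) hI

theorem setIntegral_Ioi_rpow_mul_pos {P : ℝ → ℝ} {e x₁ : ℝ} (hx₁ : 0 ≤ x₁)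
    (hpos : ∀ᵐ s ∂volume.restrict (Ioi x₁), 0 ≤ P s)
    (hne : ¬ ∀ᵐ s ∂volume.restrict (Ioi x₁), P s = 0)
    (hint : IntegrableOn (fun s => s ^ e * P s) (Ioi x₁)) :
    0 < ∫ s in Ioi x₁, s ^ e * P s := by
  have hfpos : ∀ᵐ s ∂volume.restrict (Ioi x₁), 0 ≤ s ^ e * P s := by
    filter_upwards [ae_restrict_mem measurableSet_Ioi, hpos] with s hs hPs
    exact mul_nonneg (Real.rpow_nonneg (hx₁.trans hs.le) _) hPs
  refine (integral_nonneg_of_ae hfpos).lt_of_ne fun h => hne ?_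
  filter_upwards [ae_restrict_mem measurableSet_Ioi,
    ((integral_eq_zero_iff_of_nonneg_ae hfpos hint).1 h.symm)] with s hs hfs
  exact (mul_eq_zero.1 hfs).resolve_left (Real.rpow_pos_of_pos (hx₁.trans_lt hs) _).ne'

theorem stmt_14_general (σ α r : ℝ) (hσ : 0 < σ)
    (hΔ : 0 < (σ ^ 2 / 2 - α) ^ 2 + 2 * σ ^ 2 * r)
    (d₁ d₂ : ℝ)
    (hd₁ : d₁ = ((σ ^ 2 / 2 - α) - Real.sqrt ((σ ^ 2 / 2 - α) ^ 2 + 2 * σ ^ 2 * r)) / σ ^ 2)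
    (hd₂ : d₂ = ((σ ^ 2 / 2 - α) + Real.sqrt ((σ ^ 2 / 2 - α) ^ 2 + 2 * σ ^ 2 * r)) / σ ^ 2)
    (Pf : ℝ → ℝ)
    (x₁ : ℝ) (hx₁ : 0 < x₁)
    (hneg : ∀ᵐ x ∂(volume.restrict (Set.Ioo 0 x₁)), Pf x < 0)
    (hpos : ∀ᵐ x ∂(volume.restrict (Set.Ici x₁)), 0 ≤ Pf x)
    (hne : ¬ (∀ᵐ x ∂(volume.restrict (Set.Ioi x₁)), Pf x = 0))
    (hint : ∀ w : ℝ, 0 < w →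
      IntegrableOn (fun s : ℝ => s ^ (-d₂ - 1) * Pf s) (Set.Ioi w))
    (γ : ℝ)
    (hγ : γ = sInf {x : ℝ | 0 < x ∧ ∃ C, x < C ∧
      0 ≤ ∫ s in x..C, ((C / s) ^ d₂ - (C / s) ^ d₁) * Pf s / s})
    (hγpos : 0 < γ) :
    ∫ s in Set.Ioi γ, s ^ (-d₂ - 1) * Pf s = 0 := by
  have hd : d₁ < d₂ := by
    rw [hd₁, hd₂]
    gcongr
    linarith [Real.sqrt_pos.2 hΔ]
  have hFx₁ : 0 < ∫ s in Ioi x₁, s ^ (-d₂ - 1) * Pf s :=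
    setIntegral_Ioi_rpow_mul_pos hx₁.le
      (ae_restrict_of_ae_restrict_of_subset Ioi_subset_Ici_self hpos) hne (hint x₁ hx₁)
  have hF : ContinuousAt (fun y => ∫ s in Ioi y, s ^ (-d₂ - 1) * Pf s) γ :=
    (hint _ (half_pos hγpos)).continuousOn_Ici_primitive_Ioi.continuousAt
      (Ici_mem_nhds (half_lt_self hγpos))
  subst hγ
  refine apply_sInf_eq_zero ?_ ⟨0, fun x hx => hx.1.le⟩ hγpos hF ?_ ?_
  · obtain ⟨C, hxC, hJ⟩ := exists_intervalIntegral_kernel_pos hd hx₁ (hint x₁ hx₁) hFx₁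
    exact ⟨x₁, hx₁, C, hxC, hJ.le⟩
  · rintro x ⟨hx, C, hxC, hJ⟩
    by_contra! hFx
    exact (intervalIntegral_kernel_neg hd hx hx₁.le hxC (hint x hx)
      (ae_restrict_of_ae_restrict_of_subset (Ioo_subset_Ioo_left hx.le) hneg) hpos hFx).not_ge hJ
  · intro x hx hFx
    obtain ⟨C, hxC, hJ⟩ := exists_intervalIntegral_kernel_pos hd hx (hint x hx) hFx
    exact ⟨hx, C, hxC, hJ.le⟩

/-- If the profit function `Π` is negative a.e. near `0`, nonnegative a.e. beyond `x₁ₗ`,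
not a.e. zero there, and `s ↦ s^{−d₂−1} Π(s)` is integrable on every `(w,∞)`, then the
threshold `γ` (when strictly positive) satisfies the integral equation
`∫_γ^∞ s^{−d₂−1} Π(s) ds = 0`. -/
theorem stmt_14 (σ α r : ℝ) (hσ : 0 < σ)
    (hΔ : 0 < (σ ^ 2 / 2 - α) ^ 2 + 2 * σ ^ 2 * r)
    (d₁ d₂ : ℝ)
    (hd₁ : d₁ = ((σ ^ 2 / 2 - α) - Real.sqrt ((σ ^ 2 / 2 - α) ^ 2 + 2 * σ ^ 2 * r)) / σ ^ 2)
    (hd₂ : d₂ = ((σ ^ 2 / 2 - α) + Real.sqrt ((σ ^ 2 / 2 - α) ^ 2 + 2 * σ ^ 2 * r)) / σ ^ 2)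
    (Pf : ℝ → ℝ) (hPm : Measurable Pf)
    (hloc : LocallyIntegrableOn Pf (Set.Ioi 0))
    (x₁ : ℝ) (hx₁ : 0 < x₁)
    (hneg : ∀ᵐ x ∂(volume.restrict (Set.Ioo 0 x₁)), Pf x < 0)
    (hpos : ∀ᵐ x ∂(volume.restrict (Set.Ici x₁)), 0 ≤ Pf x)
    (hne : ¬ (∀ᵐ x ∂(volume.restrict (Set.Ioi x₁)), Pf x = 0))
    (hint : ∀ w : ℝ, 0 < w →
      IntegrableOn (fun s : ℝ => s ^ (-d₂ - 1) * Pf s) (Set.Ioi w))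
    (γ : ℝ)
    (hγ : γ = sInf {x : ℝ | 0 < x ∧ ∃ C, x < C ∧
      0 ≤ ∫ s in x..C, ((C / s) ^ d₂ - (C / s) ^ d₁) * Pf s / s})
    (hγpos : 0 < γ) :
    ∫ s in Set.Ioi γ, s ^ (-d₂ - 1) * Pf s = 0 :=
  stmt_14_general σ α r hσ hΔ d₁ d₂ hd₁ hd₂ Pf x₁ hx₁ hneg hpos hne hint γ hγ hγpos
end

section
/- Let σ > 0 and α, r ∈ ℝ with Δ := (σ²/2 − α)² + 2σ²r > 0, and let d₁ < d₂ be the roots of P(d) := (σ²/2)d² + (α − σ²/2)d − r. Let Π : (0,∞) → ℝ be Borel measurable and locally integrable, and suppose there are 0 < x₁ₗ ≤ x₂ᵣ < ∞ such that Π(x) < 0 for a.e. x ∈ (0, x₁ₗ) ∪ (x₂ᵣ, ∞) and Π(x) ≥ 0 for a.e. x ∈ [x₁ₗ, x₂ᵣ]. Suppose 0 < δ < β < ∞ satisfy δ = inf{ x ∈ (0, β) : ∫_x^β ((β/s)^{d₂} − (β/s)^{d₁}) · Π(s)/s ds ≥ 0 } and β = sup{ x > δ : ∫_δ^x ((δ/s)^{d₂}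 − (δ/s)^{d₁}) · Π(s)/s ds ≥ 0 }. Then ∫_δ^β s^{−d₁−1} Π(s) ds = 0 and ∫_δ^β s^{−d₂−1} Π(s) ds = 0. -/
open MeasureTheory Set

/-- Two-sided stopping region: if `Π` is negative a.e. near `0` and near `∞`, nonnegative
a.e. on the intermediate interval `[x₁ₗ, x₂ᵣ]`, and `0 < δ < β < ∞` satisfy the
variational characterizations `δ = inf{x ∈ (0,β) : ∫_x^β ((β/s)^{d₂} − (β/s)^{d₁}) Π(s)/s ds ≥ 0}`
and `β = sup{x > δ : ∫_δ^x ((δ/s)^{d₂} − (δ/s)^{d₁}) Π(s)/s ds ≥ 0}`, then the pair of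
integral equations `∫_δ^β s^{−d₁−1} Π(s) ds = 0` and `∫_δ^β s^{−d₂−1} Π(s) ds = 0` holds. -/
theorem stmt_16 (σ α r : ℝ) (hσ : 0 < σ)
    (hΔ : 0 < (σ ^ 2 / 2 - α) ^ 2 + 2 * σ ^ 2 * r)
    (d₁ d₂ : ℝ)
    (hd₁ : d₁ = ((σ ^ 2 / 2 - α) - Real.sqrt ((σ ^ 2 / 2 - α) ^ 2 + 2 * σ ^ 2 * r)) / σ ^ 2)
    (hd₂ : d₂ = ((σ ^ 2 / 2 - α) + Real.sqrt ((σ ^ 2 / 2 - α) ^ 2 + 2 * σ ^ 2 * r)) / σ ^ 2)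
    (Pf : ℝ → ℝ) (hPm : Measurable Pf)
    (hloc : LocallyIntegrableOn Pf (Set.Ioi 0))
    (x₁ x₂ : ℝ) (hx₁ : 0 < x₁) (hx₁₂ : x₁ ≤ x₂)
    (hneg₁ : ∀ᵐ x ∂(volume.restrict (Set.Ioo 0 x₁)), Pf x < 0)
    (hneg₂ : ∀ᵐ x ∂(volume.restrict (Set.Ioi x₂)), Pf x < 0)
    (hpos : ∀ᵐ x ∂(volume.restrict (Set.Icc x₁ x₂)), 0 ≤ Pf x)
    (δ β : ℝ) (hδpos : 0 < δ) (hδβ : δ < β)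
    (hδ : δ = sInf {x : ℝ | x ∈ Set.Ioo (0 : ℝ) β ∧
      0 ≤ ∫ s in x..β, ((β / s) ^ d₂ - (β / s) ^ d₁) * Pf s / s})
    (hβ : β = sSup {x : ℝ | δ < x ∧
      0 ≤ ∫ s in δ..x, ((δ / s) ^ d₂ - (δ / s) ^ d₁) * Pf s / s}) :
    (∫ s in δ..β, s ^ (-d₁ - 1) * Pf s = 0) ∧
    (∫ s in δ..β, s ^ (-d₂ - 1) * Pf s = 0) := by
  have hβpos : 0 < β := hδpos.trans hδβ
  have hσ2 : (0:ℝ) < σ ^ 2 := by positivity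
  have hsq : 0 < Real.sqrt ((σ ^ 2 / 2 - α) ^ 2 + 2 * σ ^ 2 * r) := Real.sqrt_pos.2 hΔ
  have hd : d₁ < d₂ := by
    rw [hd₁, hd₂]
    apply div_lt_div_of_pos_right ?_ hσ2
    linarith
  -- continuity of the kernels on (0, ∞)
  have hKcont : ∀ c : ℝ, 0 < c →
      ContinuousOn (fun s : ℝ => ((c / s) ^ d₂ - (c / s) ^ d₁) / s) (Ioi (0:ℝ)) := by
    intro c hc
    have hdiv : ContinuousOn (fun s : ℝ => c / s) (Ioi (0:ℝ)) :=
      continuousOn_const.div continuousOn_id (fun x hx => ne_of_gt hx)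
    have hne : ∀ x ∈ Ioi (0:ℝ), c / x ≠ 0 ∨ (0:ℝ) ≤ d₂ := by
      intro x hx; exact Or.inl (div_ne_zero (ne_of_gt hc) (ne_of_gt (mem_Ioi.1 hx)))
    have hne' : ∀ x ∈ Ioi (0:ℝ), c / x ≠ 0 ∨ (0:ℝ) ≤ d₁ := by
      intro x hx; exact Or.inl (div_ne_zero (ne_of_gt hc) (ne_of_gt (mem_Ioi.1 hx)))
    exact ((hdiv.rpow_const hne).sub (hdiv.rpow_const hne')).div continuousOn_id
      (fun x hx => ne_of_gt hx)
  have hJcont : ∀ d : ℝ, ContinuousOn (fun s : ℝ => s ^ (-d - 1)) (Ioi (0:ℝ)) := by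
    intro d
    exact continuousOn_id.rpow_const (fun x hx => Or.inl (ne_of_gt hx))
  -- integrability on compact subintervals of (0, ∞)
  have hsub : ∀ a b : ℝ, 0 < a → 0 < b → uIcc a b ⊆ Ioi (0:ℝ) := by
    intro a b ha hb x hx
    exact lt_of_lt_of_le (lt_min ha hb) hx.1
  have hPint : ∀ a b : ℝ, 0 < a → 0 < b → IntegrableOn Pf (uIcc a b) volume := by
    intro a b ha hb
    exact hloc.integrableOn_compact_subset (hsub a b ha hb) isCompact_uIcc
  have hKint : ∀ c a b : ℝ, 0 < c → 0 < a → 0 < b →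
      IntegrableOn (fun s => ((c / s) ^ d₂ - (c / s) ^ d₁) / s * Pf s) (uIcc a b) volume := by
    intro c a b hc ha hb
    exact IntegrableOn.continuousOn_mul ((hKcont c hc).mono (hsub a b ha hb))
      (hPint a b ha hb) isCompact_uIcc
  have hJint : ∀ d a b : ℝ, 0 < a → 0 < b →
      IntegrableOn (fun s => s ^ (-d - 1) * Pf s) (uIcc a b) volume := by
    intro d a b ha hb
    exact IntegrableOn.continuousOn_mul ((hJcont d).mono (hsub a b ha hb))
      (hPint a b ha hb) isCompact_uIcc
  -- rewrite the integrand as a product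
  have hEq : ∀ c x y : ℝ, (∫ s in x..y, ((c / s) ^ d₂ - (c / s) ^ d₁) * Pf s / s)
      = ∫ s in x..y, ((c / s) ^ d₂ - (c / s) ^ d₁) / s * Pf s := by
    intro c x y
    simp only [mul_div_right_comm]
  set F : ℝ → ℝ := fun x => ∫ s in x..β, ((β / s) ^ d₂ - (β / s) ^ d₁) / s * Pf s with hF
  set G : ℝ → ℝ := fun x => ∫ s in δ..x, ((δ / s) ^ d₂ - (δ / s) ^ d₁) / s * Pf s with hG
  set S : Set ℝ := {x : ℝ | x ∈ Set.Ioo (0 : ℝ) β ∧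
      0 ≤ ∫ s in x..β, ((β / s) ^ d₂ - (β / s) ^ d₁) * Pf s / s} with hS
  set T : Set ℝ := {x : ℝ | δ < x ∧
      0 ≤ ∫ s in δ..x, ((δ / s) ^ d₂ - (δ / s) ^ d₁) * Pf s / s} with hT
  have hSmem : ∀ x, x ∈ S ↔ (x ∈ Set.Ioo (0:ℝ) β ∧ 0 ≤ F x) := by
    intro x; rw [hS, mem_setOf_eq, hEq β x β]
  have hTmem : ∀ x, x ∈ T ↔ (δ < x ∧ 0 ≤ G x) := by
    intro x; rw [hT, mem_setOf_eq, hEq δ δ x]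
  -- continuity of F at δ
  have hFcontAt : ContinuousAt F δ := by
    have h1 : uIcc (δ/2) β = Icc (δ/2) β := uIcc_of_le (by linarith)
    have hc : ContinuousOn F (uIcc (δ/2) β) :=
      intervalIntegral.continuousOn_primitive_interval_left
        (hKint β (δ/2) β hβpos (by linarith) hβpos)
    rw [h1] at hc
    exact hc.continuousAt (Icc_mem_nhds (by linarith) hδβ)
  have hGcontAt : ContinuousAt G β := by
    have h1 : uIcc δ (β+1) = Icc δ (β+1) := uIcc_of_le (by linarith)
    have hc : ContinuousOn G (uIcc δ (β+1)) :=
      intervalIntegral.continuousOn_primitive_interval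
        (hKint δ δ (β+1) hδpos hδpos (by linarith))
    rw [h1] at hc
    exact hc.continuousAt (Icc_mem_nhds hδβ (by linarith))
  -- S is nonempty and bounded below
  have hSne : S.Nonempty := by
    by_contra h
    rw [Set.not_nonempty_iff_eq_empty] at h
    rw [h, Real.sInf_empty] at hδ
    exact absurd hδ (ne_of_gt hδpos)
  have hSbdd : BddBelow S := ⟨0, fun x hx => le_of_lt hx.1.1⟩
  -- T is nonempty and bounded above
  have hTne : T.Nonempty := by
    by_contra h
    rw [Set.not_nonempty_iff_eq_empty] at h
    rw [h, Real.sSup_empty] at hβ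
    exact absurd hβ (ne_of_gt hβpos)
  have hTbdd : BddAbove T := by
    by_contra h
    rw [Real.sSup_of_not_bddAbove h] at hβ
    exact absurd hβ (ne_of_gt hβpos)
  -- F δ = 0
  have hFδ : F δ = 0 := by
    rcases lt_trichotomy (F δ) 0 with h | h | h
    · exfalso
      have hev : F ⁻¹' (Iio 0) ∈ nhds δ := hFcontAt (Iio_mem_nhds h)
      rcases Metric.mem_nhds_iff.1 hev with ⟨ε, hε, hball⟩
      rcases Real.lt_sInf_add_pos hSne hε with ⟨x, hxS, hxlt⟩
      rw [← hδ] at hxlt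
      have hxge : δ ≤ x := hδ ▸ csInf_le hSbdd hxS
      have : F x < 0 := hball (by
        simp only [Metric.mem_ball, Real.dist_eq]
        rw [abs_lt]; constructor <;> linarith)
      exact absurd ((hSmem x).1 hxS).2 (not_le.2 this)
    · exact h
    · exfalso
      have hev : F ⁻¹' (Ioi 0) ∈ nhds δ := hFcontAt (Ioi_mem_nhds h)
      rcases Metric.mem_nhds_iff.1 hev with ⟨ε, hε, hball⟩
      have hx0 : 0 < max (δ/2) (δ - ε/2) := lt_max_of_lt_left (by linarith)
      have hxδ : max (δ/2) (δ - ε/2) < δ := max_lt (by linarith) (by linarith)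
      have hxball : max (δ/2) (δ - ε/2) ∈ Metric.ball δ ε := by
        simp only [Metric.mem_ball, Real.dist_eq]
        rw [abs_lt]
        constructor
        · have h2 : δ - ε/2 ≤ max (δ/2) (δ - ε/2) := le_max_right _ _
          linarith
        · linarith
      have hxF : 0 < F (max (δ/2) (δ - ε/2)) := hball hxball
      have hxS : max (δ/2) (δ - ε/2) ∈ S := (hSmem _).2 ⟨⟨hx0, hxδ.trans hδβ⟩, le_of_lt hxF⟩
      have hfin := csInf_le hSbdd hxS
      rw [← hδ] at hfin
      linarith
  -- G β = 0
  have hGβ : G β = 0 := by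
    rcases lt_trichotomy (G β) 0 with h | h | h
    · exfalso
      have hev : G ⁻¹' (Iio 0) ∈ nhds β := hGcontAt (Iio_mem_nhds h)
      rcases Metric.mem_nhds_iff.1 hev with ⟨ε, hε, hball⟩
      rcases Real.add_neg_lt_sSup hTne (neg_neg_iff_pos.2 hε) with ⟨x, hxT, hxlt⟩
      rw [← hβ] at hxlt
      have hxle : x ≤ β := hβ ▸ le_csSup hTbdd hxT
      have : G x < 0 := hball (by
        simp only [Metric.mem_ball, Real.dist_eq]
        rw [abs_lt]; constructor <;> linarith)
      exact absurd ((hTmem x).1 hxT).2 (not_le.2 this)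
    · exact h
    · exfalso
      have hev : G ⁻¹' (Ioi 0) ∈ nhds β := hGcontAt (Ioi_mem_nhds h)
      rcases Metric.mem_nhds_iff.1 hev with ⟨ε, hε, hball⟩
      have hxball : β + ε/2 ∈ Metric.ball β ε := by
        simp only [Metric.mem_ball, Real.dist_eq]
        rw [abs_lt]; constructor <;> linarith
      have hxG : 0 < G (β + ε/2) := hball hxball
      have hxT : β + ε/2 ∈ T := (hTmem _).2 ⟨by linarith, le_of_lt hxG⟩
      have hfin := le_csSup hTbdd hxT
      rw [← hβ] at hfin
      linarith
  -- express F δ and G β in terms of the two goal integrals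
  set I₁ : ℝ := ∫ s in δ..β, s ^ (-d₁ - 1) * Pf s with hI₁
  set I₂ : ℝ := ∫ s in δ..β, s ^ (-d₂ - 1) * Pf s with hI₂
  have hker : ∀ c : ℝ, 0 < c → ∀ s ∈ uIcc δ β,
      ((c / s) ^ d₂ - (c / s) ^ d₁) / s * Pf s
        = c ^ d₂ * (s ^ (-d₂ - 1) * Pf s) - c ^ d₁ * (s ^ (-d₁ - 1) * Pf s) := by
    intro c hc s hs
    have hs0 : 0 < s := by
      have := hs.1
      rw [uIcc_of_le (le_of_lt hδβ)] at hs
      linarith [hs.1]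
    have hdr : ∀ d : ℝ, (c / s) ^ d / s = c ^ d * s ^ (-d - 1) := by
      intro d
      rw [Real.div_rpow (le_of_lt hc) (le_of_lt hs0), div_div,
        ← Real.rpow_add_one (ne_of_gt hs0) d, div_eq_mul_inv,
        ← Real.rpow_neg (le_of_lt hs0), show -(d + 1) = -d - 1 by ring]
    rw [sub_div, hdr d₂, hdr d₁]
    ring
  have hexp : ∀ c : ℝ, 0 < c →
      (∫ s in δ..β, ((c / s) ^ d₂ - (c / s) ^ d₁) / s * Pf s)
        = c ^ d₂ * I₂ - c ^ d₁ * I₁ := by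
    intro c hc
    rw [intervalIntegral.integral_congr (fun s hs => hker c hc s hs)]
    rw [intervalIntegral.integral_sub
      ((hJint d₂ δ β hδpos hβpos).intervalIntegrable.const_mul _)
      ((hJint d₁ δ β hδpos hβpos).intervalIntegrable.const_mul _)]
    rw [intervalIntegral.integral_const_mul, intervalIntegral.integral_const_mul]
  have eq1 : β ^ d₂ * I₂ - β ^ d₁ * I₁ = 0 := by
    rw [← hexp β hβpos]; exact hFδ
  have eq2 : δ ^ d₂ * I₂ - δ ^ d₁ * I₁ = 0 := by
    rw [← hexp δ hδpos]; exact hGβ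
  -- the determinant is nonzero
  have hdet : δ ^ d₂ * β ^ d₁ < β ^ d₂ * δ ^ d₁ := by
    have hb1 : 1 < β / δ := (one_lt_div hδpos).2 hδβ
    have := (Real.rpow_lt_rpow_left_iff hb1).2 hd
    rw [Real.div_rpow hβpos.le hδpos.le, Real.div_rpow hβpos.le hδpos.le] at this
    have hδ1 : (0:ℝ) < δ ^ d₁ := Real.rpow_pos_of_pos hδpos d₁
    have hδ2 : (0:ℝ) < δ ^ d₂ := Real.rpow_pos_of_pos hδpos d₂
    rw [div_lt_div_iff₀ hδ1 hδ2] at this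
    linarith
  constructor
  · -- I₁ = 0
    have h : (β ^ d₂ * δ ^ d₁ - δ ^ d₂ * β ^ d₁) * I₁ = 0 := by
      linear_combination δ ^ d₂ * eq1 - β ^ d₂ * eq2
    rcases mul_eq_zero.1 h with h' | h'
    · exact absurd h' (by intro h''; linarith)
    · exact h'
  · have h : (β ^ d₂ * δ ^ d₁ - δ ^ d₂ * β ^ d₁) * I₂ = 0 := by
      linear_combination δ ^ d₁ * eq1 - β ^ d₁ * eq2
    rcases mul_eq_zero.1 h with h' | h'
    · exact absurd h' (by intro h''; linarith)
    · exact h'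
end

section
/- Let σ > 0 and α, r ∈ ℝ with Δ := (σ²/2 − α)² + 2σ²r > 0, and let d₁ < d₂ be the roots of P(d) := (σ²/2)d² + (α − σ²/2)d − r. Let Π : (0,∞) → ℝ be Borel measurable and locally integrable, with x₁ₗ > 0 such that Π(x) < 0 for a.e. x ∈ (0, x₁ₗ) and Π(x) ≥ 0 for a.e. x ≥ x₁ₗ, and assume s ↦ s^{−d₂−1} Π⁺(s) is integrable on (w, ∞) and s ↦ s^{−d₁−1} Π⁺(s) is integrable on (0, w) for every w > 0. Suppose there exist ε > 0 and k > 0 with Π(x) ≤ −k for a.e. x ∈ (0, ε), and that either d₂ ≥ 0, or ∫_0^{x₁ₗ} s^{−d₁−1} Π⁻(s) ds = ∞. Then γ := inf{ x > 0 : ∃ C > x, ∫_x^C ((C/s)^{d₂} − (C/s)^{d₁}) · Π(s)/s ds ≥ 0 } is strictly positive. -/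
/-!
Put `g s = s ^ (-d₂ - 1) * Π⁻ s`. Either branch of the alternative makes `g` non-integrable at
`0`: for `d₂ ≥ 0` because `Π ≤ -k` near `0`, otherwise because `s ^ (-d₁ - 1) ≤ s ^ (-d₂ - 1)`
on `(0, 1)`. Hence, for small `m > 0`, `∫_x^m g` is unbounded as `x → 0`. On the other hand, if
`x < m` lies in the set with witness `C`, then `C ≥ 2m` (for `C < 2m` the integrand is negative
on `(x, C)`), and splitting the integral at `m`, with
`(C/s)^d₂ - (C/s)^d₁ ≥ (1 - 2^(d₁-d₂)) (C/s)^d₂` for `s ≤ C/2` and `≤ (C/s)^d₂` for `s ≤ C`,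
gives `(1 - 2^(d₁-d₂)) ∫_x^m g ≤ ∫_m^∞ s ^ (-d₂ - 1) Π⁺ s ds < ∞`.
So the set stays away from `0`; it is nonempty because it contains `x₁`.
-/

open MeasureTheory Set

section Kernel

variable {d₁ d₂ C s : ℝ}

lemma rpow_div_div_self (hC : 0 < C) (hs : 0 < s) (d : ℝ) :
    (C / s) ^ d / s = C ^ d * s ^ (-d - 1) := by
  rw [Real.div_rpow hC.le hs.le, Real.rpow_sub_one hs.ne', Real.rpow_neg hs.le]
  ring

lemma rpow_sub_rpow_nonneg {t : ℝ} (ht : 1 ≤ t) (hd : d₁ ≤ d₂) : 0 ≤ t ^ d₂ - t ^ d₁ :=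
  sub_nonneg.2 (Real.rpow_le_rpow_of_exponent_le ht hd)

lemma rpow_sub_rpow_pos {t : ℝ} (ht : 1 < t) (hd : d₁ < d₂) : 0 < t ^ d₂ - t ^ d₁ :=
  sub_pos.2 (Real.rpow_lt_rpow_of_exponent_lt ht hd)

lemma one_sub_two_rpow_mul_le {t : ℝ} (ht : 2 ≤ t) (hd : d₁ ≤ d₂) :
    (1 - 2 ^ (d₁ - d₂)) * t ^ d₂ ≤ t ^ d₂ - t ^ d₁ := by
  have ht0 : 0 < t := by linarith
  have h : t ^ (d₁ - d₂) ≤ 2 ^ (d₁ - d₂) :=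
    Real.rpow_le_rpow_of_nonpos two_pos ht (by linarith)
  have h' : t ^ d₁ = t ^ d₂ * t ^ (d₁ - d₂) := by
    rw [← Real.rpow_add ht0]; ring_nf
  nlinarith [Real.rpow_nonneg ht0.le d₂]

lemma kernel_mul_div_le_posPart (hd : d₁ ≤ d₂) (hs : 0 < s) (hsC : s ≤ C) (y : ℝ) :
    ((C / s) ^ d₂ - (C / s) ^ d₁) * y / s ≤ C ^ d₂ * (s ^ (-d₂ - 1) * max y 0) := by
  have hC : 0 < C := hs.trans_le hsC
  have hK := rpow_sub_rpow_nonneg ((one_le_div hs).2 hsC) hd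
  have hd₁ : 0 ≤ (C / s) ^ d₁ := Real.rpow_nonneg (div_pos hC hs).le _
  calc ((C / s) ^ d₂ - (C / s) ^ d₁) * y / s
      ≤ (C / s) ^ d₂ * max y 0 / s := by
        gcongr ?_ / s
        nlinarith [le_max_left y 0, le_max_right y 0]
    _ = C ^ d₂ * (s ^ (-d₂ - 1) * max y 0) := by
        rw [mul_div_right_comm, rpow_div_div_self hC hs, mul_assoc]

lemma kernel_mul_div_le_negPart (hd : d₁ ≤ d₂) (hs : 0 < s) (hsC : 2 * s ≤ C) {y : ℝ}
    (hy : y ≤ 0) :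
    ((C / s) ^ d₂ - (C / s) ^ d₁) * y / s
      ≤ -((1 - 2 ^ (d₁ - d₂)) * C ^ d₂ * (s ^ (-d₂ - 1) * max (-y) 0)) := by
  have hC : 0 < C := by linarith
  have h2 : 2 ≤ C / s := (le_div_iff₀ hs).2 (by linarith)
  have hK := one_sub_two_rpow_mul_le (d₁ := d₁) h2 hd
  rw [max_eq_left (neg_nonneg.2 hy)]
  calc ((C / s) ^ d₂ - (C / s) ^ d₁) * y / s
      ≤ (1 - 2 ^ (d₁ - d₂)) * ((C / s) ^ d₂ / s) * y := by
        rw [mul_div_right_comm, ← mul_div_assoc]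
        exact mul_le_mul_of_nonpos_right (by gcongr) hy
    _ = _ := by rw [rpow_div_div_self hC hs]; ring

end Kernel

section Integrability

variable {f : ℝ → ℝ} {a b : ℝ}

lemma MeasureTheory.LocallyIntegrableOn.integrableOn_Icc_of_pos
    (hf : LocallyIntegrableOn f (Ioi 0)) (ha : 0 < a) : IntegrableOn f (Icc a b) :=
  hf.integrableOn_compact_subset (fun _ hs => ha.trans_le hs.1) isCompact_Icc

lemma integrableOn_Icc_kernel_mul_div (hf : LocallyIntegrableOn f (Ioi 0)) (ha : 0 < a)
    {C : ℝ} (hC : 0 < C) (d₁ d₂ : ℝ) :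
    IntegrableOn (fun s => ((C / s) ^ d₂ - (C / s) ^ d₁) * f s / s) (Icc a b) := by
  have hne : ∀ s ∈ Icc a b, s ≠ 0 := fun s hs => (ha.trans_le hs.1).ne'
  have hCs : ContinuousOn (fun s : ℝ => C / s) (Icc a b) :=
    continuousOn_const.div continuousOn_id hne
  have hpow (d : ℝ) : ContinuousOn (fun s : ℝ => (C / s) ^ d) (Icc a b) :=
    hCs.rpow_const fun s hs => Or.inl (div_pos hC (ha.trans_le hs.1)).ne'
  have hK : ContinuousOn (fun s : ℝ => ((C / s) ^ d₂ - (C / s) ^ d₁) / s) (Icc a b) :=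
    ((hpow d₂).sub (hpow d₁)).div continuousOn_id hne
  exact ((hf.integrableOn_Icc_of_pos ha).continuousOn_mul hK isCompact_Icc).congr_fun
    (fun s _ => by ring) measurableSet_Icc

lemma integrableOn_Icc_rpow_mul_negPart (hf : LocallyIntegrableOn f (Ioi 0)) (ha : 0 < a)
    (e : ℝ) : IntegrableOn (fun s => s ^ e * max (-f s) 0) (Icc a b) :=
  IntegrableOn.continuousOn_mul
    (continuousOn_id.rpow_const fun _ hs => Or.inl (ha.trans_le hs.1).ne')
    (hf.integrableOn_Icc_of_pos ha).neg_part isCompact_Icc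

end Integrability

lemma intervalIntegral_neg_of_ae_neg {F : ℝ → ℝ} {a b : ℝ} (hab : a < b)
    (hF : IntervalIntegrable F volume a b) (hneg : ∀ᵐ s ∂volume.restrict (Ioo a b), F s < 0) :
    ∫ s in a..b, F s < 0 := by
  rw [Measure.restrict_congr_set Ioo_ae_eq_Ioc] at hneg
  have hvol : volume.restrict (Ioc a b) ≠ 0 := by simp [hab]
  have hlt := intervalIntegral.integral_lt_integral_of_ae_le_of_measure_setOfPred_lt_ne_zero
    hab.le hF intervalIntegrable_const (hneg.mono fun _ h => h.le) ?_
  · simpa using hlt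
  · intro h0
    have := ae_neBot.2 hvol
    obtain ⟨s, hs, hs'⟩ := (hneg.and (measure_eq_zero_iff_ae_notMem.1 h0)).exists
    exact hs' hs

lemma exists_forall_lt_setIntegral_Ioc_of_not_integrableOn {g : ℝ → ℝ} {m : ℝ}
    (hg : ∀ s ∈ Ioc 0 m, 0 ≤ g s) (hint : ∀ x, 0 < x → IntegrableOn g (Ioc x m))
    (hdiv : ¬ IntegrableOn g (Ioc 0 m)) (R : ℝ) :
    ∃ x₀ ∈ Ioo 0 m, ∀ x ∈ Ioc 0 x₀, R < ∫ s in Ioc x m, g s := by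
  have hm : 0 < m := by
    by_contra! h
    exact hdiv (by simp [Ioc_eq_empty_of_le h])
  suffices ∃ x₀ ∈ Ioo 0 m, R < ∫ s in Ioc x₀ m, g s by
    obtain ⟨x₀, hx₀, hR⟩ := this
    refine ⟨x₀, hx₀, fun x hx => hR.trans_le (setIntegral_mono_set (hint x hx.1)
      (ae_restrict_of_forall_mem measurableSet_Ioc fun s hs => hg s ⟨hx.1.trans hs.1, hs.2⟩)
      (Ioc_subset_Ioc_left hx.2).eventuallyLE)⟩
  by_contra! hbdd
  refine hdiv (integrableOn_Ioc_of_intervalIntegral_norm_bounded_left (l := Filter.atTop)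
    (a := fun n : ℕ => m * (1 / ((n : ℝ) + 1))) (I := R) (fun n => hint _ (by positivity))
    (by simpa using tendsto_one_div_add_atTop_nhds_zero_nat.const_mul m) ?_)
  refine Filter.eventually_atTop.2 ⟨1, fun n hn => ?_⟩
  have hn' : (1 : ℝ) < n + 1 := by norm_cast; omega
  have ha : 0 < m * (1 / ((n : ℝ) + 1)) := by positivity
  have ham : m * (1 / ((n : ℝ) + 1)) < m :=
    mul_lt_of_lt_one_right hm ((div_lt_one (by positivity)).2 hn')
  rw [setIntegral_congr_fun measurableSet_Ioc
    fun s hs => Real.norm_of_nonneg (hg s ⟨ha.trans hs.1, hs.2⟩)]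
  exact hbdd _ ⟨ha, ham⟩

section KernelIntegral

variable {f : ℝ → ℝ} {d₁ d₂ m x C : ℝ}

lemma intervalIntegral_kernel_mul_div_nonneg (hd : d₁ ≤ d₂) (hx : 0 < x) (hxC : x ≤ C)
    (hf : ∀ᵐ s ∂volume.restrict (Ioc x C), 0 ≤ f s) :
    0 ≤ ∫ s in x..C, ((C / s) ^ d₂ - (C / s) ^ d₁) * f s / s := by
  rw [intervalIntegral.integral_of_le hxC]
  refine setIntegral_nonneg_of_ae_restrict ?_
  filter_upwards [hf, ae_restrict_mem measurableSet_Ioc] with s hfs hs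
  have hs0 : 0 < s := hx.trans hs.1
  exact div_nonneg (mul_nonneg (rpow_sub_rpow_nonneg ((one_le_div hs0).2 hs.2) hd) hfs) hs0.le

lemma intervalIntegral_kernel_mul_div_neg (hd : d₁ < d₂) (hf : LocallyIntegrableOn f (Ioi 0))
    (hx : 0 < x) (hxC : x < C) (hneg : ∀ᵐ s ∂volume.restrict (Ioo x C), f s < 0) :
    ∫ s in x..C, ((C / s) ^ d₂ - (C / s) ^ d₁) * f s / s < 0 := by
  have hC : 0 < C := hx.trans hxC
  refine intervalIntegral_neg_of_ae_neg hxC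
    ((intervalIntegrable_iff_integrableOn_Icc_of_le hxC.le).2
      (integrableOn_Icc_kernel_mul_div hf hx hC d₁ d₂)) ?_
  filter_upwards [hneg, ae_restrict_mem measurableSet_Ioo] with s hfs hs
  have hs0 : 0 < s := hx.trans hs.1
  exact div_neg_of_neg_of_pos
    (mul_neg_of_pos_of_neg (rpow_sub_rpow_pos ((one_lt_div hs0).2 hs.2) hd) hfs) hs0

lemma setIntegral_Ioc_kernel_mul_div_le_negPart (hd : d₁ ≤ d₂)
    (hf : LocallyIntegrableOn f (Ioi 0)) (hx : 0 < x) (hmC : 2 * m ≤ C)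
    (hneg : ∀ᵐ s ∂volume.restrict (Ioc x m), f s ≤ 0) :
    ∫ s in Ioc x m, ((C / s) ^ d₂ - (C / s) ^ d₁) * f s / s
      ≤ -((1 - 2 ^ (d₁ - d₂)) * C ^ d₂ * ∫ s in Ioc x m, s ^ (-d₂ - 1) * max (-f s) 0) := by
  rcases le_or_gt x m with hxm | hmx
  · have hC : 0 < C := by linarith
    rw [← integral_const_mul, ← integral_neg]
    refine integral_mono_ae
      ((integrableOn_Icc_kernel_mul_div hf hx hC d₁ d₂).mono_set Ioc_subset_Icc_self)
      (((integrableOn_Icc_rpow_mul_negPart hf hx _).mono_set Ioc_subset_Icc_self).const_mul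
        _).neg ?_
    filter_upwards [hneg, ae_restrict_mem measurableSet_Ioc] with s hfs hs
    exact kernel_mul_div_le_negPart hd (hx.trans hs.1) (by linarith [hs.2]) hfs
  · simp [Ioc_eq_empty_of_le hmx.le]

lemma setIntegral_Ioc_kernel_mul_div_le_posPart (hd : d₁ ≤ d₂)
    (hf : LocallyIntegrableOn f (Ioi 0)) (hm : 0 < m) (hmC : m ≤ C)
    (hpos : IntegrableOn (fun s => s ^ (-d₂ - 1) * max (f s) 0) (Ioi m)) :
    ∫ s in Ioc m C, ((C / s) ^ d₂ - (C / s) ^ d₁) * f s / s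
      ≤ C ^ d₂ * ∫ s in Ioi m, s ^ (-d₂ - 1) * max (f s) 0 := by
  have hC : 0 < C := hm.trans_le hmC
  calc ∫ s in Ioc m C, ((C / s) ^ d₂ - (C / s) ^ d₁) * f s / s
      ≤ ∫ s in Ioc m C, C ^ d₂ * (s ^ (-d₂ - 1) * max (f s) 0) :=
        setIntegral_mono_on
          ((integrableOn_Icc_kernel_mul_div hf hm hC d₁ d₂).mono_set Ioc_subset_Icc_self)
          ((hpos.mono_set Ioc_subset_Ioi_self).const_mul _) measurableSet_Ioc
          fun s hs => kernel_mul_div_le_posPart hd (hm.trans hs.1) hs.2 _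
    _ ≤ C ^ d₂ * ∫ s in Ioi m, s ^ (-d₂ - 1) * max (f s) 0 := by
        rw [integral_const_mul]
        refine mul_le_mul_of_nonneg_left (setIntegral_mono_set hpos ?_
          Ioc_subset_Ioi_self.eventuallyLE) (Real.rpow_nonneg hC.le _)
        filter_upwards [ae_restrict_mem measurableSet_Ioi] with s hs
        exact mul_nonneg (Real.rpow_nonneg (hm.trans hs).le _) (le_max_right _ _)

lemma one_sub_two_rpow_mul_integral_negPart_le (hd : d₁ < d₂)
    (hf : LocallyIntegrableOn f (Ioi 0)) (hx : 0 < x) (hxm : x < m) (hxC : x < C)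
    (hneg : ∀ᵐ s ∂volume.restrict (Ioo 0 (2 * m)), f s < 0)
    (hpos : IntegrableOn (fun s => s ^ (-d₂ - 1) * max (f s) 0) (Ioi m))
    (hI : 0 ≤ ∫ s in x..C, ((C / s) ^ d₂ - (C / s) ^ d₁) * f s / s) :
    (1 - 2 ^ (d₁ - d₂)) * ∫ s in Ioc x m, s ^ (-d₂ - 1) * max (-f s) 0
      ≤ ∫ s in Ioi m, s ^ (-d₂ - 1) * max (f s) 0 := by
  have hm : 0 < m := hx.trans hxm
  rcases lt_or_ge C (2 * m) with hC2 | hC2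
  · exact absurd hI (intervalIntegral_kernel_mul_div_neg hd hf hx hxC
      (ae_restrict_of_ae_restrict_of_subset (Ioo_subset_Ioo hx.le hC2.le) hneg)).not_ge
  have hC : 0 < C := by linarith
  have hint (a b : ℝ) (ha : 0 < a) (hab : a ≤ b) :
      IntervalIntegrable (fun s => ((C / s) ^ d₂ - (C / s) ^ d₁) * f s / s) volume a b :=
    (intervalIntegrable_iff_integrableOn_Icc_of_le hab).2
      (integrableOn_Icc_kernel_mul_div hf ha hC d₁ d₂)
  rw [← intervalIntegral.integral_add_adjacent_intervals (hint x m hx hxm.le)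
    (hint m C hm (by linarith)), intervalIntegral.integral_of_le hxm.le,
    intervalIntegral.integral_of_le (by linarith)] at hI
  have hnear := setIntegral_Ioc_kernel_mul_div_le_negPart hd.le hf hx hC2
    (ae_restrict_of_ae_restrict_of_subset (Ioc_subset_Ioo hx.le (by linarith)) hneg
      |>.mono fun _ h => h.le)
  have hfar := setIntegral_Ioc_kernel_mul_div_le_posPart hd.le hf hm (by linarith : m ≤ C) hpos
  refine le_of_mul_le_mul_left ?_ (Real.rpow_pos_of_pos hC d₂)
  linarith

end KernelIntegral

section Divergence

variable {f : ℝ → ℝ} {m : ℝ}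

lemma not_integrableOn_Ioo_rpow_mul_negPart_of_le_neg {e k : ℝ} (hm : 0 < m) (he : e ≤ -1)
    (hk : 0 < k) (hf : ∀ᵐ s ∂volume.restrict (Ioo 0 m), f s ≤ -k) :
    ¬ IntegrableOn (fun s => s ^ e * max (-f s) 0) (Ioo 0 m) := by
  intro h
  refine he.not_gt ((intervalIntegral.integrableOn_Ioo_rpow_iff hm).1 ((h.const_mul k⁻¹).mono'
    (measurable_id.pow_const e).aestronglyMeasurable ?_))
  filter_upwards [hf, ae_restrict_mem measurableSet_Ioo] with s hfs hs
  have hse : 0 ≤ s ^ e := Real.rpow_nonneg hs.1.le e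
  rw [Real.norm_of_nonneg hse, ← mul_assoc, mul_comm k⁻¹, mul_assoc]
  refine le_mul_of_one_le_right hse ?_
  rw [inv_mul_eq_div, one_le_div hk]
  exact le_max_of_le_left (by linarith)

lemma not_integrableOn_Ioo_rpow_mul_negPart_of_lintegral_eq_top {d₁ d₂ b : ℝ}
    (hf : LocallyIntegrableOn f (Ioi 0)) (hm : 0 < m) (hm1 : m ≤ 1)
    (hd : d₁ ≤ d₂)
    (htop : ∫⁻ s in Ioo 0 b, ENNReal.ofReal (s ^ (-d₁ - 1) * max (-f s) 0) = ⊤) :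
    ¬ IntegrableOn (fun s => s ^ (-d₂ - 1) * max (-f s) 0) (Ioo 0 m) := by
  intro h
  have hfm : AEStronglyMeasurable f (volume.restrict (Ioo 0 m)) :=
    hf.aestronglyMeasurable.mono_measure (Measure.restrict_mono Ioo_subset_Ioi_self le_rfl)
  have hnear : IntegrableOn (fun s => s ^ (-d₁ - 1) * max (-f s) 0) (Ioo 0 m) := by
    refine h.mono' (by fun_prop) ?_
    filter_upwards [ae_restrict_mem measurableSet_Ioo] with s hs
    rw [Real.norm_of_nonneg (mul_nonneg (Real.rpow_nonneg hs.1.le _) (le_max_right _ _))]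
    exact mul_le_mul_of_nonneg_right
      (Real.rpow_le_rpow_of_exponent_ge hs.1 (hs.2.le.trans hm1) (by linarith))
      (le_max_right _ _)
  have hall : IntegrableOn (fun s => s ^ (-d₁ - 1) * max (-f s) 0) (Ioo 0 b) :=
    (hnear.union (integrableOn_Icc_rpow_mul_negPart hf hm _)).mono_set fun s hs =>
      (lt_or_ge s m).imp (fun h => ⟨hs.1, h⟩) fun h => ⟨h, hs.2.le⟩
  exact hall.lintegral_lt_top.ne htop

lemma not_integrableOn_Ioc_rpow_mul_negPart {d₁ d₂ b ε k : ℝ}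
    (hf : LocallyIntegrableOn f (Ioi 0)) (hm : 0 < m) (hm1 : m ≤ 1) (hmε : m ≤ ε)
    (hd : d₁ ≤ d₂) (hk : 0 < k) (hbelow : ∀ᵐ s ∂volume.restrict (Ioo 0 ε), f s ≤ -k)
    (halt : 0 ≤ d₂ ∨
      ∫⁻ s in Ioo 0 b, ENNReal.ofReal (s ^ (-d₁ - 1) * max (-f s) 0) = ⊤) :
    ¬ IntegrableOn (fun s => s ^ (-d₂ - 1) * max (-f s) 0) (Ioc 0 m) := by
  rw [integrableOn_Ioc_iff_integrableOn_Ioo]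
  rcases halt with hd₂ | htop
  · exact not_integrableOn_Ioo_rpow_mul_negPart_of_le_neg hm (by linarith) hk
      (ae_restrict_of_ae_restrict_of_subset (Ioo_subset_Ioo_right hmε) hbelow)
  · exact not_integrableOn_Ioo_rpow_mul_negPart_of_lintegral_eq_top hf hm hm1 hd htop

end Divergence

theorem stmt_17_general (σ α r : ℝ) (hσ : 0 < σ)
    (hΔ : 0 < (σ ^ 2 / 2 - α) ^ 2 + 2 * σ ^ 2 * r)
    (d₁ d₂ : ℝ)
    (hd₁ : d₁ = ((σ ^ 2 / 2 - α) - Real.sqrt ((σ ^ 2 / 2 - α) ^ 2 + 2 * σ ^ 2 * r)) / σ ^ 2)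
    (hd₂ : d₂ = ((σ ^ 2 / 2 - α) + Real.sqrt ((σ ^ 2 / 2 - α) ^ 2 + 2 * σ ^ 2 * r)) / σ ^ 2)
    (Pf : ℝ → ℝ)
    (hloc : LocallyIntegrableOn Pf (Set.Ioi 0))
    (x₁ : ℝ) (hx₁ : 0 < x₁)
    (hneg : ∀ᵐ x ∂(volume.restrict (Set.Ioo 0 x₁)), Pf x < 0)
    (hpos : ∀ᵐ x ∂(volume.restrict (Set.Ici x₁)), 0 ≤ Pf x)
    (hintp₂ : ∀ w : ℝ, 0 < w →
      IntegrableOn (fun s : ℝ => s ^ (-d₂ - 1) * max (Pf s) 0) (Set.Ioi w))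
    (ε k : ℝ) (hε : 0 < ε) (hk : 0 < k)
    (hbelow : ∀ᵐ x ∂(volume.restrict (Set.Ioo 0 ε)), Pf x ≤ -k)
    (halt : 0 ≤ d₂ ∨
      ∫⁻ s in Set.Ioo (0 : ℝ) x₁,
        ENNReal.ofReal (s ^ (-d₁ - 1) * max (-Pf s) 0) = ⊤) :
    0 < sInf {x : ℝ | 0 < x ∧ ∃ C, x < C ∧
      0 ≤ ∫ s in x..C, ((C / s) ^ d₂ - (C / s) ^ d₁) * Pf s / s} := by
  have hd : d₁ < d₂ := by
    rw [hd₁, hd₂]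
    exact div_lt_div_of_pos_right (by linarith [Real.sqrt_pos.2 hΔ]) (by positivity)
  set m := min (min ε x₁) 1 / 2
  have hm : 0 < m := by positivity
  have hmε : m ≤ ε := by grind
  have hmx₁ : 2 * m ≤ x₁ := by grind
  have hm1 : m ≤ 1 := by grind
  have hc : 0 < 1 - (2 : ℝ) ^ (d₁ - d₂) :=
    sub_pos.2 (Real.rpow_lt_one_of_one_lt_of_neg one_lt_two (by linarith))
  obtain ⟨x₀, hx₀, hlarge⟩ := exists_forall_lt_setIntegral_Ioc_of_not_integrableOn
    (fun s hs => mul_nonneg (Real.rpow_nonneg hs.1.le _) (le_max_right _ _))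
    (fun x hx => (integrableOn_Icc_rpow_mul_negPart hloc hx _).mono_set Ioc_subset_Icc_self)
    (not_integrableOn_Ioc_rpow_mul_negPart hloc hm hm1 hmε hd.le hk hbelow halt)
    ((∫ s in Ioi m, s ^ (-d₂ - 1) * max (Pf s) 0) / (1 - 2 ^ (d₁ - d₂)))
  refine hx₀.1.trans_le (le_csInf ⟨x₁, hx₁, x₁ + 1, by linarith,
    intervalIntegral_kernel_mul_div_nonneg hd.le hx₁ (by linarith)
      (ae_restrict_of_ae_restrict_of_subset (fun _ hs => le_of_lt hs.1) hpos)⟩ ?_)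
  rintro y ⟨hy, C, hyC, hI⟩
  by_contra! hyx₀
  have hbound := one_sub_two_rpow_mul_integral_negPart_le hd hloc hy (hyx₀.trans hx₀.2) hyC
    (ae_restrict_of_ae_restrict_of_subset (Ioo_subset_Ioo_right hmx₁) hneg) (hintp₂ m hm) hI
  have hy_large := hlarge y ⟨hy, hyx₀.le⟩
  rw [div_lt_iff₀ hc] at hy_large
  linarith

/-- Non-degeneracy of the exit threshold: if `Π` is negative a.e. near `0` (bounded away
from `0` by `−k` on `(0,ε)`), nonnegative a.e. beyond `x₁ₗ`, the positive part `Π⁺` has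
the integrability required for `v_p⁺ < ∞`, and either `d₂ ≥ 0` or
`∫_0^{x₁ₗ} s^{−d₁−1} Π⁻(s) ds = ∞`, then
`γ = inf{x > 0 : ∃ C > x, ∫_x^C ((C/s)^{d₂} − (C/s)^{d₁}) Π(s)/s ds ≥ 0}` is strictly
positive. -/
theorem stmt_17 (σ α r : ℝ) (hσ : 0 < σ)
    (hΔ : 0 < (σ ^ 2 / 2 - α) ^ 2 + 2 * σ ^ 2 * r)
    (d₁ d₂ : ℝ)
    (hd₁ : d₁ = ((σ ^ 2 / 2 - α) - Real.sqrt ((σ ^ 2 / 2 - α) ^ 2 + 2 * σ ^ 2 * r)) / σ ^ 2)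
    (hd₂ : d₂ = ((σ ^ 2 / 2 - α) + Real.sqrt ((σ ^ 2 / 2 - α) ^ 2 + 2 * σ ^ 2 * r)) / σ ^ 2)
    (Pf : ℝ → ℝ) (hPm : Measurable Pf)
    (hloc : LocallyIntegrableOn Pf (Set.Ioi 0))
    (x₁ : ℝ) (hx₁ : 0 < x₁)
    (hneg : ∀ᵐ x ∂(volume.restrict (Set.Ioo 0 x₁)), Pf x < 0)
    (hpos : ∀ᵐ x ∂(volume.restrict (Set.Ici x₁)), 0 ≤ Pf x)
    (hintp₂ : ∀ w : ℝ, 0 < w →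
      IntegrableOn (fun s : ℝ => s ^ (-d₂ - 1) * max (Pf s) 0) (Set.Ioi w))
    (hintp₁ : ∀ w : ℝ, 0 < w →
      IntegrableOn (fun s : ℝ => s ^ (-d₁ - 1) * max (Pf s) 0) (Set.Ioo 0 w))
    (ε k : ℝ) (hε : 0 < ε) (hk : 0 < k)
    (hbelow : ∀ᵐ x ∂(volume.restrict (Set.Ioo 0 ε)), Pf x ≤ -k)
    (halt : 0 ≤ d₂ ∨
      ∫⁻ s in Set.Ioo (0 : ℝ) x₁,
        ENNReal.ofReal (s ^ (-d₁ - 1) * max (-Pf s) 0) = ⊤) :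
    0 < sInf {x : ℝ | 0 < x ∧ ∃ C, x < C ∧
      0 ≤ ∫ s in x..C, ((C / s) ^ d₂ - (C / s) ^ d₁) * Pf s / s} :=
  stmt_17_general σ α r hσ hΔ d₁ d₂ hd₁ hd₂ Pf hloc x₁ hx₁ hneg hpos hintp₂ ε k hε hk hbelow halt
end

section
/- Let d₁ < d₂ be real numbers and let Π : (0,∞) → ℝ be Borel measurable and locally integrable on (0,∞). Define γ := inf{ x > 0 : ∃ C > x, ∫_x^C ((C/s)^{d₂} − (C/s)^{d₁}) · Π(s)/s ds ≥ 0 }, and assume the defining set is nonempty and γ > 0. Then for every x > γ, ∫_γ^x ((x/s)^{d₂} − (x/s)^{d₁}) · Π(s)/s ds ≤ 0. Equivalently, for any σ ≠ 0 the candidate value function v(x) := −2/(σ²(d₂−d₁)) ∫_γ^x ((x/s)^{d₂} − (x/s)^{d₁}) Π(s)/s ds is nonnegative on (γ, ∞). -/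
open MeasureTheory Set

/-- Nonnegativity of the candidate value function on the continuation region: if
`γ = inf{x > 0 : ∃ C > x, ∫_x^C ((C/s)^{d₂} − (C/s)^{d₁}) Π(s)/s ds ≥ 0}` with a
nonempty defining set and `γ > 0`, then `∫_γ^x ((x/s)^{d₂} − (x/s)^{d₁}) Π(s)/s ds ≤ 0`
for all `x > γ`; equivalently, for any `σ ≠ 0` the candidate value function
`v(x) = −2/(σ²(d₂−d₁)) ∫_γ^x ((x/s)^{d₂} − (x/s)^{d₁}) Π(s)/s ds` is nonnegative on
`(γ,∞)`. -/
theorem stmt_19 (d₁ d₂ : ℝ) (hd : d₁ < d₂)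
    (Pf : ℝ → ℝ) (hPm : Measurable Pf)
    (hloc : LocallyIntegrableOn Pf (Set.Ioi 0))
    (S : Set ℝ)
    (hS : S = {x : ℝ | 0 < x ∧ ∃ C, x < C ∧
      0 ≤ ∫ s in x..C, ((C / s) ^ d₂ - (C / s) ^ d₁) * Pf s / s})
    (hne : S.Nonempty) (γ : ℝ) (hγ : γ = sInf S) (hγpos : 0 < γ) :
    (∀ x : ℝ, γ < x →
      ∫ s in γ..x, ((x / s) ^ d₂ - (x / s) ^ d₁) * Pf s / s ≤ 0) ∧
    (∀ σ : ℝ, σ ≠ 0 → ∀ x : ℝ, γ < x →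
      0 ≤ -2 / (σ ^ 2 * (d₂ - d₁)) *
        ∫ s in γ..x, ((x / s) ^ d₂ - (x / s) ^ d₁) * Pf s / s) := by
  have hbdd : BddBelow S := by
    refine ⟨0, fun y hy => ?_⟩
    rw [hS] at hy
    exact le_of_lt hy.1
  have hmain : ∀ x : ℝ, γ < x →
      ∫ s in γ..x, ((x / s) ^ d₂ - (x / s) ^ d₁) * Pf s / s ≤ 0 := by
    intro x hx
    have hxpos : 0 < x := lt_trans hγpos hx
    set g : ℝ → ℝ := fun s => ((x / s) ^ d₂ - (x / s) ^ d₁) * Pf s / s with hgdef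
    -- integrability of g on any compact interval in (0,∞)
    have hguIcc : ∀ a b : ℝ, 0 < a → 0 < b → IntegrableOn g (uIcc a b) volume := by
      intro a b ha hb
      have hsub : uIcc a b ⊆ Ioi (0 : ℝ) := fun t ht =>
        lt_of_lt_of_le (lt_min ha hb) ht.1
      have hPf : IntegrableOn Pf (uIcc a b) volume :=
        hloc.integrableOn_compact_subset hsub isCompact_uIcc
      have hne0 : ∀ t ∈ uIcc a b, t ≠ 0 := fun t ht => ne_of_gt (hsub ht)
      have hdiv : ContinuousOn (fun s : ℝ => x / s) (uIcc a b) :=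
        continuousOn_const.div continuousOn_id hne0
      have hc : ContinuousOn (fun s : ℝ => ((x / s) ^ d₂ - (x / s) ^ d₁) / s)
          (uIcc a b) := by
        have hpos : ∀ t ∈ uIcc a b, x / t ≠ 0 :=
          fun t ht => ne_of_gt (div_pos hxpos (hsub ht))
        exact ((hdiv.rpow_const (fun t ht => Or.inl (hpos t ht))).sub
          (hdiv.rpow_const (fun t ht => Or.inl (hpos t ht)))).div
          continuousOn_id hne0
      have := hPf.continuousOn_mul hc isCompact_uIcc
      refine this.congr_fun (fun t ht => ?_) measurableSet_uIcc
      simp [hgdef, mul_div_right_comm]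
    have hint : ∀ a b : ℝ, 0 < a → 0 < b → IntervalIntegrable g volume a b := by
      intro a b ha hb
      rw [intervalIntegrable_iff]
      exact (hguIcc a b ha hb).mono_set Ioc_subset_Icc_self
    by_contra hcon
    push_neg at hcon
    set I := ∫ s in γ..x, g s with hIdef
    set F : ℝ → ℝ := fun y => ∫ t in y..γ, g t with hFdef
    have hF : ContinuousOn F (uIcc (γ/2) γ) :=
      intervalIntegral.continuousOn_primitive_interval_left
        (hguIcc (γ/2) γ (by linarith) hγpos)
    have hγmem : γ ∈ uIcc (γ/2) γ := right_mem_uIcc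
    have hFγ : F γ = 0 := intervalIntegral.integral_same
    have htend : Filter.Tendsto F (nhdsWithin γ (Ico (γ/2) γ)) (nhds 0) := by
      have := (hF γ hγmem).mono_left
        (nhdsWithin_mono γ (Ico_subset_Icc_self.trans (by
          rw [uIcc_of_le (by linarith : γ/2 ≤ γ)])))
      rwa [hFγ] at this
    have hneBot : (nhdsWithin γ (Ico (γ/2) γ)).NeBot := by
      rw [← mem_closure_iff_nhdsWithin_neBot, closure_Ico (by linarith : γ/2 ≠ γ)]
      exact ⟨by linarith, le_refl γ⟩
    have hev : ∀ᶠ y in nhdsWithin γ (Ico (γ/2) γ), -I < F y :=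
      htend.eventually (eventually_gt_nhds (by linarith : -I < 0))
    obtain ⟨y, hyF, hyMem⟩ := (hev.and self_mem_nhdsWithin).exists
    have hypos : 0 < y := lt_of_lt_of_le (by linarith) hyMem.1
    have hylt : y < γ := hyMem.2
    have hadd : (∫ t in y..x, g t) = F y + I :=
      (intervalIntegral.integral_add_adjacent_intervals
        (hint y γ hypos hγpos) (hint γ x hγpos hxpos)).symm
    have hyS : y ∈ S := by
      rw [hS]
      exact ⟨hypos, x, lt_trans hylt hx, by rw [hadd]; linarith⟩
    have : γ ≤ y := hγ ▸ csInf_le hbdd hyS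
    linarith
  refine ⟨hmain, ?_⟩
  intro σ hσ x hx
  have hden : (0:ℝ) < σ ^ 2 * (d₂ - d₁) := by
    have h1 : (0:ℝ) < σ ^ 2 := by positivity
    have h2 : (0:ℝ) < d₂ - d₁ := by linarith
    positivity
  have h1 : -2 / (σ ^ 2 * (d₂ - d₁)) ≤ 0 := by
    rw [neg_div]
    exact neg_nonpos.mpr (le_of_lt (div_pos two_pos hden))
  nlinarith [hmain x hx, h1, mul_nonneg (neg_nonneg.mpr h1) (neg_nonneg.mpr (hmain x hx))]
end
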